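/- arXiv:1503.00130 — 6 statements merged into one kernel-verified Lean document; each statement's English description precedes it below -/
import Mathlib

section
/- Let F(Z) = Z^p + A_1 Z^{p-1} + ... + A_p be a monic polynomial over a field K of characteristic zero, with roots ξ_1, ..., ξ_p in an algebraic closure of K. For each j define the generalized discriminant D_j = Σ_{r_1 < ... < r_j} Π_{k<l, k,l ∈ {r_1,...,r_j}} (ξ_k - ξ_l)^2. Then F has exactly d distinct roots if and only if D_{d+1} = ... = D_p = 0 and D_d ≠ 0. -/
/-!
A summand of `D_j` vanishes unless `ξ` is injective on its index set `s`; if it is, the summand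
is a product over the unordered pairs of distinct values in `ξ '' s`, so it depends only on that
set of values. Hence, with `e` the number of distinct roots, `D_j = 0` for `j > e`, while every
nonvanishing summand of `D_e` equals the discriminant of the set of all roots, making `D_e` a
positive integer multiple of a nonzero element.
-/

open Finset

namespace Finset

variable {ι α β M : Type*} [CommMonoid M]

theorem prod_sym2_filter_not_isDiag_eq_prod_lt [LinearOrder ι] (s : Finset ι) (f : Sym2 ι → M) :
    ∏ z ∈ s.sym2 with ¬z.IsDiag, f z = ∏ k ∈ s, ∏ l ∈ s with k < l, f s(k, l) := by
  have h := congrArg Additive.toMul (sum_sym2_filter_not_isDiag s (Additive.ofMul ∘ f))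
  simp only [toMul_sum, Function.comp_apply, toMul_ofMul] at h
  rw [h, prod_finset_product]
  intro q
  simp only [mem_filter, mem_offDiag]
  exact ⟨fun h => ⟨h.1.1, h.1.2.1, h.2⟩, fun h => ⟨⟨h.1, h.2.1, h.2.2.ne⟩, h.2.2⟩⟩

theorem prod_sym2_filter_not_isDiag_image [DecidableEq α] [DecidableEq β] {s : Finset α}
    {f : α → β} (hf : Set.InjOn f s) (g : Sym2 β → M) :
    ∏ z ∈ (s.image f).sym2 with ¬z.IsDiag, g z = ∏ z ∈ s.sym2 with ¬z.IsDiag, g (z.map f) := by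
  have hdiag : ∀ z ∈ s.sym2, ¬(z.map f).IsDiag ↔ ¬z.IsDiag := by
    rintro ⟨a, b⟩ hz
    rw [mk_mem_sym2_iff] at hz
    simpa using (hf.eq_iff hz.1 hz.2).not
  have hinj : Set.InjOn (Sym2.map f) (s.sym2 : Set (Sym2 α)) := by
    rintro ⟨a, b⟩ hz ⟨c, d⟩ hw h
    rw [mem_coe, mk_mem_sym2_iff] at hz hw
    simp only [Sym2.map_mk, Sym2.eq_iff] at h ⊢
    rwa [hf.eq_iff hz.1 hw.1, hf.eq_iff hz.2 hw.2, hf.eq_iff hz.1 hw.2, hf.eq_iff hz.2 hw.1] at h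
  rw [sym2_image, filter_image, filter_congr hdiag,
    prod_image (hinj.mono (coe_subset.2 (filter_subset _ _)))]

end Finset

section GeneralizedDiscriminant

variable {R ι : Type*} [CommRing R]

def sqSub : Sym2 R → R :=
  Sym2.lift ⟨fun a b => (a - b) ^ 2, fun a b => by ring⟩

/-- The discriminant of `∏ a ∈ T, (X - a)`. -/
def rootSetDiscr [DecidableEq R] (T : Finset R) : R :=
  ∏ z ∈ T.sym2 with ¬z.IsDiag, sqSub z

theorem rootSetDiscr_ne_zero [DecidableEq R] [IsDomain R] (T : Finset R) :
    rootSetDiscr T ≠ 0 := by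
  refine prod_ne_zero_iff.2 ?_
  rintro ⟨a, b⟩ hz
  simp only [mem_filter, Sym2.mk_isDiag_iff] at hz
  exact pow_ne_zero _ (sub_ne_zero.2 hz.2)

variable [LinearOrder ι]

theorem prod_sq_sub_eq_prod_sym2 (ξ : ι → R) (s : Finset ι) :
    ∏ k ∈ s, ∏ l ∈ s with k < l, (ξ k - ξ l) ^ 2
      = ∏ z ∈ s.sym2 with ¬z.IsDiag, sqSub (z.map ξ) :=
  (prod_sym2_filter_not_isDiag_eq_prod_lt s fun z => sqSub (z.map ξ)).symm

theorem prod_sq_sub_eq_zero_of_not_injOn {ξ : ι → R} {s : Finset ι} (h : ¬Set.InjOn ξ s) :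
    ∏ k ∈ s, ∏ l ∈ s with k < l, (ξ k - ξ l) ^ 2 = 0 := by
  obtain ⟨a, ha, b, hb, hab, hne⟩ : ∃ a ∈ s, ∃ b ∈ s, ξ a = ξ b ∧ a ≠ b := by
    simpa [Set.InjOn] using h
  rw [prod_sq_sub_eq_prod_sym2]
  refine prod_eq_zero (mem_filter.2 ⟨mk_mem_sym2_iff.2 ⟨ha, hb⟩, ?_⟩) ?_
  · simpa using hne
  · simp [sqSub, hab]

theorem prod_sq_sub_eq_rootSetDiscr_image [DecidableEq R] {ξ : ι → R} {s : Finset ι}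
    (h : Set.InjOn ξ s) :
    ∏ k ∈ s, ∏ l ∈ s with k < l, (ξ k - ξ l) ^ 2 = rootSetDiscr (s.image ξ) := by
  rw [prod_sq_sub_eq_prod_sym2, rootSetDiscr, prod_sym2_filter_not_isDiag_image h]

variable [Fintype ι]

def genDiscr (ξ : ι → R) (j : ℕ) : R :=
  ∑ s ∈ powersetCard j univ, ∏ k ∈ s, ∏ l ∈ s with k < l, (ξ k - ξ l) ^ 2

theorem genDiscr_eq_zero_of_card_image_lt [DecidableEq R] {ξ : ι → R} {j : ℕ}
    (hj : #(univ.image ξ) < j) : genDiscr ξ j = 0 := by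
  refine sum_eq_zero fun s hs => prod_sq_sub_eq_zero_of_not_injOn fun hinj => ?_
  have hcard : #(s.image ξ) ≤ #(univ.image ξ) := card_le_card (image_subset_image (subset_univ s))
  rw [card_image_of_injOn hinj, mem_powersetCard_univ.1 hs] at hcard
  omega

theorem genDiscr_card_image_ne_zero [IsDomain R] [CharZero R] [DecidableEq R]
    (ξ : ι → R) : genDiscr ξ #(univ.image ξ) ≠ 0 := by
  classical
  set T := univ.image ξ
  set S := (powersetCard #T univ).filter fun s : Finset ι => Set.InjOn ξ s
  have hsum : genDiscr ξ #T = #S • rootSetDiscr T := by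
    rw [genDiscr, ← sum_filter_add_sum_filter_not _ (fun s : Finset ι => Set.InjOn ξ s),
      sum_eq_zero fun s hs => prod_sq_sub_eq_zero_of_not_injOn (mem_filter.1 hs).2,
      add_zero, ← sum_const]
    refine sum_congr rfl fun s hs => ?_
    obtain ⟨hs, hinj⟩ := mem_filter.1 hs
    have himage : s.image ξ = T := eq_of_subset_of_card_le (image_subset_image (subset_univ s))
      (by rw [card_image_of_injOn hinj, mem_powersetCard_univ.1 hs])
    rw [prod_sq_sub_eq_rootSetDiscr_image hinj, himage]
  obtain ⟨u, -, hinj, hu⟩ := exists_subset_injOn_image_eq_of_surjOn (f := ξ) Set.univ T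
    (fun y hy => by simpa [T] using hy)
  have hu_mem : u ∈ S :=
    mem_filter.2 ⟨mem_powersetCard_univ.2 (hu ▸ (card_image_of_injOn hinj).symm), hinj⟩
  rw [hsum]
  exact smul_ne_zero (card_ne_zero_of_mem hu_mem) (rootSetDiscr_ne_zero T)

end GeneralizedDiscriminant

theorem stmt0_general {L : Type*} [Field L] [CharZero L] (p d : ℕ)
    (ξ : Fin p → L)
    (D : ℕ → L)
    (hD : ∀ j, D j = ∑ s ∈ Finset.powersetCard j (Finset.univ : Finset (Fin p)),
      ∏ k ∈ s, ∏ l ∈ s.filter (fun l => k < l), (ξ k - ξ l) ^ 2) :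
    Set.ncard (Set.range ξ) = d ↔
      ((∀ j, d < j → j ≤ p → D j = 0) ∧ D d ≠ 0) := by
  classical
  obtain rfl : D = genDiscr ξ := funext hD
  have hcard : Set.ncard (Set.range ξ) = #(univ.image ξ) := by
    rw [← Set.image_univ, ← coe_univ, ← coe_image, Set.ncard_coe_finset]
  have hle : #(univ.image ξ) ≤ p := card_image_le.trans (card_fin p).le
  rw [hcard]
  constructor
  · rintro rfl
    exact ⟨fun j hj _ => genDiscr_eq_zero_of_card_image_lt hj, genDiscr_card_image_ne_zero ξ⟩
  · rintro ⟨hzero, hne⟩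
    exact le_antisymm (not_lt.1 fun hlt => genDiscr_card_image_ne_zero ξ (hzero _ hlt hle))
      (not_lt.1 fun hlt => hne (genDiscr_eq_zero_of_card_image_lt hlt))

/-- Generalized discriminants detect the number of distinct roots:
`F = ∏ (Z - ξ i)` is monic of degree `p` over a field of characteristic zero,
`D j = Σ_{r₁<...<r_j} ∏_{k<l ∈ {r₁,...,r_j}} (ξ_k - ξ_l)²`.
Then `F` has exactly `d` distinct roots iff `D_{d+1} = ... = D_p = 0` and `D_d ≠ 0`. -/
theorem stmt0 {L : Type*} [Field L] [CharZero L] (p d : ℕ) (hd : 1 ≤ d) (hdp : d ≤ p)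
    (ξ : Fin p → L) (F : Polynomial L)
    (hF : F = ∏ k : Fin p, (Polynomial.X - Polynomial.C (ξ k)))
    (D : ℕ → L)
    (hD : ∀ j, D j = ∑ s ∈ Finset.powersetCard j (Finset.univ : Finset (Fin p)),
      ∏ k ∈ s, ∏ l ∈ s.filter (fun l => k < l), (ξ k - ξ l) ^ 2) :
    Set.ncard (Set.range ξ) = d ↔
      ((∀ j, d < j → j ≤ p → D j = 0) ∧ D d ≠ 0) :=
  stmt0_general p d ξ D hD
end

section
/- Let F be a monic polynomial of degree p over a field K of characteristic zero that has exactly d distinct roots with multiplicity vector m = (m_1, ..., m_d). Then there is a positive constant C depending only on p and m such that the generalized discriminant D_d of F equals C times the standard discriminant of the reduced (square-free) polynomial F_red associated to F. -/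
open Finset Polynomial

section Aux

lemma aux_half_prod {n : ℕ} {R : Type*} [CommMonoid R]
    (s : Finset (Fin n)) (h : Fin n → Fin n → R) :
    ∏ k ∈ s, ∏ l ∈ s.filter (fun l => k < l), h k l
      = ∏ x ∈ (s ×ˢ s).filter (fun x => x.1 < x.2), h x.1 x.2 := by
  rw [Finset.prod_filter, Finset.prod_product]
  simp [Finset.prod_filter]

lemma aux_mem_half_swap {n : ℕ} {s : Finset (Fin n)} {a : Fin n × Fin n}
    (ha : a ∈ (s ×ˢ s).filter (fun x => x.2 < x.1)) :
    Prod.swap a ∈ (s ×ˢ s).filter (fun x => x.1 < x.2) := by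
  rw [Finset.mem_filter, Finset.mem_product] at ha ⊢
  exact ⟨⟨ha.1.2, ha.1.1⟩, ha.2⟩

lemma aux_mem_half_swap' {n : ℕ} {s : Finset (Fin n)} {a : Fin n × Fin n}
    (ha : a ∈ (s ×ˢ s).filter (fun x => x.1 < x.2)) :
    Prod.swap a ∈ (s ×ˢ s).filter (fun x => x.2 < x.1) := by
  rw [Finset.mem_filter, Finset.mem_product] at ha ⊢
  exact ⟨⟨ha.1.2, ha.1.1⟩, ha.2⟩

lemma aux_swap_half {n : ℕ} {R : Type*} [CommMonoid R]
    (s : Finset (Fin n)) (h : Fin n → Fin n → R) :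
    ∏ x ∈ (s ×ˢ s).filter (fun x => x.2 < x.1), h x.1 x.2
      = ∏ x ∈ (s ×ˢ s).filter (fun x => x.1 < x.2), h x.2 x.1 :=
  Finset.prod_bij (fun x _ => Prod.swap x) (fun a ha => aux_mem_half_swap ha)
    (fun a _ b _ hab => Prod.swap_injective hab)
    (fun b hb => ⟨Prod.swap b, aux_mem_half_swap' hb, by simp⟩) (fun a _ => rfl)

lemma aux_offDiag_split {n : ℕ} (s : Finset (Fin n)) :
    s.offDiag = (s ×ˢ s).filter (fun x => x.1 < x.2) ∪ (s ×ˢ s).filter (fun x => x.2 < x.1) := by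
  ext x
  simp only [Finset.mem_offDiag, Finset.mem_union, Finset.mem_filter, Finset.mem_product]
  constructor
  · rintro ⟨h1, h2, h3⟩
    rcases lt_or_gt_of_ne h3 with h | h
    · exact Or.inl ⟨⟨h1, h2⟩, h⟩
    · exact Or.inr ⟨⟨h1, h2⟩, h⟩
  · rintro (⟨⟨h1, h2⟩, h⟩ | ⟨⟨h1, h2⟩, h⟩)
    · exact ⟨h1, h2, h.ne⟩
    · exact ⟨h1, h2, h.ne'⟩

lemma aux_halves_disjoint {n : ℕ} (s : Finset (Fin n)) :
    Disjoint ((s ×ˢ s).filter (fun x => x.1 < x.2)) ((s ×ˢ s).filter (fun x => x.2 < x.1)) := by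
  rw [Finset.disjoint_filter]
  intro x _ h1 h2
  exact absurd h1 (not_lt_of_gt h2)

lemma aux_offDiag_prod {n : ℕ} {R : Type*} [CommRing R] (s : Finset (Fin n)) (g : Fin n → R) :
    ∏ x ∈ s.offDiag, (g x.1 - g x.2)
      = (-1) ^ ((s ×ˢ s).filter (fun x => x.1 < x.2)).card *
        ∏ x ∈ (s ×ˢ s).filter (fun x => x.1 < x.2), (g x.1 - g x.2) ^ 2 := by
  rw [aux_offDiag_split, Finset.prod_union (aux_halves_disjoint s),
    aux_swap_half s (fun a b => g a - g b), ← Finset.prod_mul_distrib]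
  have : ∀ x ∈ (s ×ˢ s).filter (fun x : Fin n × Fin n => x.1 < x.2),
      (g x.1 - g x.2) * (g x.2 - g x.1) = (-1) * (g x.1 - g x.2) ^ 2 := by
    intro x _; ring
  rw [Finset.prod_congr rfl this, Finset.prod_mul_distrib, Finset.prod_const]

lemma aux_half_card {n : ℕ} (s : Finset (Fin n)) :
    2 * ((s ×ˢ s).filter (fun x => x.1 < x.2)).card = s.card * s.card - s.card := by
  have h1 : ((s ×ˢ s).filter (fun x => x.2 < x.1)).card
      = ((s ×ˢ s).filter (fun x => x.1 < x.2)).card :=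
    Finset.card_bij (fun x _ => Prod.swap x) (fun a ha => aux_mem_half_swap ha)
      (fun a _ b _ hab => Prod.swap_injective hab)
      (fun b hb => ⟨Prod.swap b, aux_mem_half_swap' hb, by simp⟩)
  have h2 := Finset.offDiag_card s
  rw [aux_offDiag_split, Finset.card_union_of_disjoint (aux_halves_disjoint s)] at h2
  omega

lemma aux_offDiag_transfer {p d : ℕ} {L : Type*} [CommRing L] (σ : Fin d → Fin p)
    (hσ : Function.Injective σ) (ξ : Fin p → L) (ζ : Fin d → L)
    (hcomp : ∀ i, ξ (σ i) = ζ i) {s : Finset (Fin p)} (hs : s = Finset.image σ Finset.univ) :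
    ∏ x ∈ (Finset.univ : Finset (Fin d)).offDiag, (ζ x.1 - ζ x.2)
      = ∏ x ∈ s.offDiag, (ξ x.1 - ξ x.2) := by
  subst hs
  refine Finset.prod_bij (fun x _ => (σ x.1, σ x.2)) ?_ ?_ ?_ ?_
  · intro a ha
    rw [Finset.mem_offDiag] at ha ⊢
    exact ⟨Finset.mem_image_of_mem σ (Finset.mem_univ _),
      Finset.mem_image_of_mem σ (Finset.mem_univ _), fun h => ha.2.2 (hσ h)⟩
  · intro a _ b _ hab
    rw [Prod.mk.injEq] at hab
    exact Prod.ext (hσ hab.1) (hσ hab.2)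
  · intro b hb
    rw [Finset.mem_offDiag] at hb
    obtain ⟨i, _, hi⟩ := Finset.mem_image.mp hb.1
    obtain ⟨j, _, hj⟩ := Finset.mem_image.mp hb.2.1
    refine ⟨(i, j), ?_, by simp [hi, hj]⟩
    rw [Finset.mem_offDiag]
    refine ⟨Finset.mem_univ _, Finset.mem_univ _, fun h => hb.2.2 ?_⟩
    exact hi ▸ hj ▸ congrArg σ h
  · intro a _
    simp [hcomp]

lemma aux_transfer_prod {p d : ℕ} {L : Type*} [Field L] (σ : Fin d → Fin p)
    (hσ : Function.Injective σ) (ξ : Fin p → L) (ζ : Fin d → L)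
    (hcomp : ∀ i, ξ (σ i) = ζ i) {s : Finset (Fin p)} (hs : s = Finset.image σ Finset.univ) :
    ∏ x ∈ (s ×ˢ s).filter (fun x => x.1 < x.2), (ξ x.1 - ξ x.2) ^ 2
      = ∏ x ∈ ((Finset.univ : Finset (Fin d)) ×ˢ Finset.univ).filter (fun x => x.1 < x.2),
          (ζ x.1 - ζ x.2) ^ 2 := by
  have hcard : s.card = d := by
    rw [hs, Finset.card_image_of_injective _ hσ, Finset.card_univ, Fintype.card_fin]
  have hc : ((s ×ˢ s).filter (fun x => x.1 < x.2)).card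
      = (((Finset.univ : Finset (Fin d)) ×ˢ Finset.univ).filter (fun x => x.1 < x.2)).card := by
    have h1 := aux_half_card s
    have h2 := aux_half_card (Finset.univ : Finset (Fin d))
    rw [hcard] at h1
    rw [Finset.card_univ, Fintype.card_fin] at h2
    omega
  have key := aux_offDiag_transfer σ hσ ξ ζ hcomp hs
  rw [aux_offDiag_prod s ξ, aux_offDiag_prod (Finset.univ : Finset (Fin d)) ζ, hc] at key
  have hne : ((-1 : L) ^ (((Finset.univ : Finset (Fin d)) ×ˢ Finset.univ).filter
      (fun x => x.1 < x.2)).card) ≠ 0 := pow_ne_zero _ (neg_ne_zero.mpr one_ne_zero)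
  exact (mul_left_cancel₀ hne key).symm

lemma aux_roots_eq {L : Type*} [Field L] {p d : ℕ} (m : Fin d → ℕ) (ζ : Fin d → L) (ξ : Fin p → L)
    (hF : ∏ i : Fin d, (X - C (ζ i)) ^ (m i) = ∏ k : Fin p, (X - C (ξ k))) :
    Multiset.map ξ Finset.univ.val = ∑ i : Fin d, (m i) • ({ζ i} : Multiset L) := by
  have h2 : (∏ k : Fin p, (X - C (ξ k))).roots = Multiset.map ξ Finset.univ.val := by
    rw [Finset.prod_eq_multiset_prod]
    have : Multiset.map (fun k => X - C (ξ k)) Finset.univ.val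
        = Multiset.map (fun a => X - C a) (Multiset.map ξ Finset.univ.val) := by
      rw [Multiset.map_map]; rfl
    rw [this]
    exact roots_multiset_prod_X_sub_C _
  have hne : (∏ i : Fin d, (X - C (ζ i)) ^ (m i)) ≠ 0 :=
    (monic_prod_of_monic _ _ (fun i _ => (monic_X_sub_C _).pow _)).ne_zero
  have h1 : (∏ i : Fin d, (X - C (ζ i)) ^ (m i)).roots
      = ∑ i : Fin d, (m i) • ({ζ i} : Multiset L) := by
    rw [roots_prod _ _ hne]
    simp only [roots_pow, roots_X_sub_C]
    rfl
  rw [← h2, ← hF, h1]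

lemma aux_fiber_count {L : Type*} [Field L] [DecidableEq L] {p d : ℕ} (m : Fin d → ℕ)
    (ζ : Fin d → L) (ξ : Fin p → L) (hζ : Function.Injective ζ)
    (hroots : Multiset.map ξ Finset.univ.val = ∑ i : Fin d, (m i) • ({ζ i} : Multiset L))
    (i0 : Fin d) :
    (Finset.univ.filter (fun k => ξ k = ζ i0)).card = m i0 := by
  classical
  have hc := congrArg (Multiset.count (ζ i0)) hroots
  rw [Multiset.count_map, Multiset.count_sum'] at hc
  have hr : ∀ i : Fin d, Multiset.count (ζ i0) ((m i) • ({ζ i} : Multiset L))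
      = if i = i0 then m i else 0 := by
    intro i
    rw [Multiset.count_nsmul, Multiset.count_singleton]
    by_cases h : i = i0
    · simp [h]
    · rw [if_neg h, if_neg (fun he => h (hζ he.symm)), mul_zero]
  rw [Finset.sum_congr rfl (fun i _ => hr i), Finset.sum_ite_eq' Finset.univ i0 m,
    if_pos (Finset.mem_univ _)] at hc
  rw [← hc]
  have : (Finset.univ.filter (fun k => ξ k = ζ i0)) = Finset.univ.filter (fun k => ζ i0 = ξ k) := by
    apply Finset.filter_congr
    intro k _
    exact eq_comm
  rw [this]
  rfl

lemma aux_exists_fiber {L : Type*} [Field L] {p d : ℕ} (m : Fin d → ℕ) (ζ : Fin d → L)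
    (ξ : Fin p → L)
    (hroots : Multiset.map ξ Finset.univ.val = ∑ i : Fin d, (m i) • ({ζ i} : Multiset L))
    (k : Fin p) : ∃ i, ξ k = ζ i := by
  have hmem : ξ k ∈ Multiset.map ξ Finset.univ.val :=
    Multiset.mem_map_of_mem ξ (Finset.mem_univ k)
  rw [hroots, Multiset.mem_sum] at hmem
  obtain ⟨i, _, hi⟩ := hmem
  rw [Multiset.mem_nsmul] at hi
  exact ⟨i, by simpa using hi.2⟩

lemma aux_count_good {p d : ℕ} (f : Fin p → Fin d) (m : Fin d → ℕ)
    (hfib : ∀ i, (Finset.univ.filter (fun k => f k = i)).card = m i) :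
    (((Finset.powersetCard d (Finset.univ : Finset (Fin p))).filter
      (fun s => ∀ k ∈ s, ∀ l ∈ s, f k = f l → k = l)).card) = ∏ i, m i := by
  classical
  have key : (Fintype.piFinset (fun i => Finset.univ.filter (fun k => f k = i))).card
      = ((Finset.powersetCard d (Finset.univ : Finset (Fin p))).filter
        (fun s => ∀ k ∈ s, ∀ l ∈ s, f k = f l → k = l)).card := by
    refine Finset.card_bij (fun g _ => Finset.image g Finset.univ) ?_ ?_ ?_
    · intro g hg
      rw [Fintype.mem_piFinset] at hg
      have hfg : ∀ i, f (g i) = i := fun i => (Finset.mem_filter.mp (hg i)).2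
      have hginj : Function.Injective g := fun i j hij => by
        rw [← hfg i, ← hfg j, hij]
      rw [Finset.mem_filter, Finset.mem_powersetCard_univ]
      refine ⟨by rw [Finset.card_image_of_injective _ hginj, Finset.card_univ,
        Fintype.card_fin], ?_⟩
      intro a ha b hb hab
      obtain ⟨i, _, hi⟩ := Finset.mem_image.mp ha
      obtain ⟨j, _, hj⟩ := Finset.mem_image.mp hb
      subst hi hj
      rw [hfg, hfg] at hab
      rw [hab]
    · intro g hg g' hg' hgg
      rw [Fintype.mem_piFinset] at hg hg'
      have hfg : ∀ i, f (g i) = i := fun i => (Finset.mem_filter.mp (hg i)).2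
      have hfg' : ∀ i, f (g' i) = i := fun i => (Finset.mem_filter.mp (hg' i)).2
      funext i
      have : g i ∈ Finset.image g' Finset.univ := by
        rw [← hgg]; exact Finset.mem_image_of_mem g (Finset.mem_univ i)
      obtain ⟨j, _, hj⟩ := Finset.mem_image.mp this
      have hji : j = i := by rw [← hfg i, ← hj, hfg']
      subst hji
      exact hj.symm
    · intro s hs
      rw [Finset.mem_filter, Finset.mem_powersetCard_univ] at hs
      obtain ⟨hcard, hinj'⟩ := hs
      have hinj : Set.InjOn f ↑s := fun a ha b hb hab => hinj' a ha b hb hab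
      have himg : Finset.image f s = Finset.univ := by
        apply Finset.eq_univ_of_card
        rw [Finset.card_image_of_injOn hinj, hcard, Fintype.card_fin]
      have hex : ∀ i : Fin d, ∃ k, k ∈ s ∧ f k = i := by
        intro i
        have : i ∈ Finset.image f s := himg ▸ Finset.mem_univ i
        exact Finset.mem_image.mp this |>.imp fun k hk => ⟨hk.1, hk.2⟩
      choose g hgs hfg using hex
      have hginj : Function.Injective g := fun i j hij => by
        rw [← hfg i, ← hfg j, hij]
      refine ⟨g, ?_, ?_⟩
      · rw [Fintype.mem_piFinset]
        intro i
        rw [Finset.mem_filter]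
        exact ⟨Finset.mem_univ _, hfg i⟩
      · apply Finset.eq_of_subset_of_card_le
        · intro a ha
          obtain ⟨i, _, hi⟩ := Finset.mem_image.mp ha
          exact hi ▸ hgs i
        · rw [Finset.card_image_of_injective _ hginj, Finset.card_univ, Fintype.card_fin, hcard]
  rw [← key, Fintype.card_piFinset]
  exact Finset.prod_congr rfl (fun i _ => hfib i)

end Aux

/-- Lemma (twodiscr): if a monic polynomial `F` of degree `p` over a characteristic-zero
field has exactly `d` distinct roots `ζ₁,...,ζ_d` with multiplicities `m₁,...,m_d`, then
there is a positive constant `C = C_{p,m}` (depending only on `p` and `m`) such that the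
generalized discriminant `D_d` of `F` equals `C` times the discriminant
`∏_{k<l}(ζ_k - ζ_l)²` of the reduced polynomial `F_red = ∏ (Z - ζ_i)`. -/
theorem stmt1 (p d : ℕ) (m : Fin d → ℕ) (hm : ∀ i, 1 ≤ m i) (hsum : ∑ i, m i = p) :
    ∃ C : ℕ, 0 < C ∧
      ∀ (L : Type) [Field L] [CharZero L] (ζ : Fin d → L),
        Function.Injective ζ →
        ∀ F : Polynomial L,
          F = ∏ i : Fin d, (Polynomial.X - Polynomial.C (ζ i)) ^ (m i) →
        ∀ ξ : Fin p → L,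
          F = ∏ k : Fin p, (Polynomial.X - Polynomial.C (ξ k)) →
        (∑ s ∈ Finset.powersetCard d (Finset.univ : Finset (Fin p)),
            ∏ k ∈ s, ∏ l ∈ s.filter (fun l => k < l), (ξ k - ξ l) ^ 2)
          = (C : L) *
            ∏ i : Fin d, ∏ j ∈ Finset.univ.filter (fun j => i < j), (ζ i - ζ j) ^ 2 := by
  refine ⟨∏ i, m i, Finset.prod_pos (fun i _ => hm i), ?_⟩
  intro L _ _ ζ hζ F hF1 ξ hF2
  classical
  have hroots := aux_roots_eq m ζ ξ (hF1.symm.trans hF2)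
  choose f hf using fun k => aux_exists_fiber m ζ ξ hroots k
  have hfib : ∀ i, (Finset.univ.filter (fun k => f k = i)).card = m i := by
    intro i
    rw [← aux_fiber_count m ζ ξ hζ hroots i]
    congr 1
    apply Finset.filter_congr
    intro k _
    constructor
    · intro h; rw [hf k, h]
    · intro h; exact hζ (by rw [← hf k, h])
  -- the term associated to a subset
  set T : Finset (Fin p) → L :=
    fun s => ∏ k ∈ s, ∏ l ∈ s.filter (fun l => k < l), (ξ k - ξ l) ^ 2 with hT
  -- bad subsets contribute 0
  have hsplit : (∑ s ∈ Finset.powersetCard d (Finset.univ : Finset (Fin p)), T s)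
      = ∑ s ∈ (Finset.powersetCard d (Finset.univ : Finset (Fin p))).filter
          (fun s => ∀ k ∈ s, ∀ l ∈ s, f k = f l → k = l), T s := by
    symm
    apply Finset.sum_filter_of_ne
    intro s _ hTs k hk l hl hfkl
    by_contra hne
    apply hTs
    have hξ : ξ k = ξ l := by rw [hf k, hf l, hfkl]
    rcases lt_or_gt_of_ne hne with h | h
    · exact Finset.prod_eq_zero hk (Finset.prod_eq_zero
        (Finset.mem_filter.mpr ⟨hl, h⟩) (by rw [hξ]; ring))
    · exact Finset.prod_eq_zero hl (Finset.prod_eq_zero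
        (Finset.mem_filter.mpr ⟨hk, h⟩) (by rw [hξ]; ring))
  -- good subsets each contribute the reduced discriminant
  have hgood : ∀ s ∈ (Finset.powersetCard d (Finset.univ : Finset (Fin p))).filter
      (fun s => ∀ k ∈ s, ∀ l ∈ s, f k = f l → k = l),
      T s = ∏ i : Fin d, ∏ j ∈ Finset.univ.filter (fun j => i < j), (ζ i - ζ j) ^ 2 := by
    intro s hs
    rw [Finset.mem_filter, Finset.mem_powersetCard_univ] at hs
    obtain ⟨hcard, hinj'⟩ := hs
    have hinj : Set.InjOn f ↑s := fun a ha b hb hab => hinj' a ha b hb hab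
    have himg : Finset.image f s = Finset.univ := by
      apply Finset.eq_univ_of_card
      rw [Finset.card_image_of_injOn hinj, hcard, Fintype.card_fin]
    have hex : ∀ i : Fin d, ∃ k, k ∈ s ∧ f k = i := by
      intro i
      have : i ∈ Finset.image f s := himg ▸ Finset.mem_univ i
      exact Finset.mem_image.mp this |>.imp fun k hk => ⟨hk.1, hk.2⟩
    choose σ hσs hfσ using hex
    have hσinj : Function.Injective σ := fun i j hij => by
      rw [← hfσ i, ← hfσ j, hij]
    have hsimg : s = Finset.image σ Finset.univ := by
      symm
      apply Finset.eq_of_subset_of_card_le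
      · intro a ha
        obtain ⟨i, _, hi⟩ := Finset.mem_image.mp ha
        exact hi ▸ hσs i
      · rw [Finset.card_image_of_injective _ hσinj, Finset.card_univ, Fintype.card_fin, hcard]
    have hcomp : ∀ i, ξ (σ i) = ζ i := by
      intro i
      rw [hf (σ i), hfσ i]
    simp only [hT]
    rw [aux_half_prod s (fun k l => (ξ k - ξ l) ^ 2),
      aux_half_prod (Finset.univ : Finset (Fin d)) (fun i j => (ζ i - ζ j) ^ 2)]
    exact aux_transfer_prod σ hσinj ξ ζ hcomp hsimg
  rw [hsplit, Finset.sum_congr rfl hgood, Finset.sum_const,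
    aux_count_good f m hfib, nsmul_eq_mul, Nat.cast_prod]
end

section
/- Let f : U → ℂ be a function on an open connected set U ⊂ ℂ^m × ℂ such that f is bounded on U and complex analytic on U \ (U ∩ (ℂ^m × {0})). Then f extends to (equivalently, is) a complex analytic function on all of U. -/
/-!
Off the hyperplane `s = 0` there is nothing to prove. Near a point `(a, 0)` every slice
`s ↦ f (z, s)` is bounded and holomorphic on a punctured disc, so by the one-variable removable
singularity theorem its extension satisfies the Cauchy formula
`g (z, s) = (2πi)⁻¹ ∮_{|w| = r} f (z, w) / (w - s) dw`.
The integrand is jointly analytic in `(z, s)` near every point of the circle, and an integral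
over a compact interval of a jointly analytic integrand is analytic in the parameter: on a short
arc the integrand is a single power series in `z` whose coefficients are continuous functions
on the arc, and finitely many arcs cover the circle.
-/

open scoped NNReal ENNReal Topology
open Set Filter Metric

namespace ContinuousMap

variable {𝕜 ι Θ F : Type*} {E : ι → Type*} [NontriviallyNormedField 𝕜] [Fintype ι]
  [∀ i, NormedAddCommGroup (E i)] [∀ i, NormedSpace 𝕜 (E i)]
  [NormedAddCommGroup F] [NormedSpace 𝕜 F] [TopologicalSpace Θ] [CompactSpace Θ]

noncomputable def toContinuousMultilinearMap (M : C(Θ, ContinuousMultilinearMap 𝕜 E F)) :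
    ContinuousMultilinearMap 𝕜 E C(Θ, F) :=
  MultilinearMap.mkContinuous
    { toFun := fun v => ⟨fun θ => M θ v, (continuous_eval_const v).comp M.continuous⟩
      map_update_add' := fun v i x y => by ext θ; simp
      map_update_smul' := fun v i c x => by ext θ; simp }
    ‖M‖ fun v => (ContinuousMap.norm_le _ (by positivity)).2 fun θ =>
      ((M θ).le_opNorm v).trans (by gcongr; exact M.norm_coe_le_norm θ)

@[simp]
theorem toContinuousMultilinearMap_apply (M : C(Θ, ContinuousMultilinearMap 𝕜 E F))
    (v : ∀ i, E i) (θ : Θ) : M.toContinuousMultilinearMap v θ = M θ v :=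
  rfl

theorem norm_toContinuousMultilinearMap_le (M : C(Θ, ContinuousMultilinearMap 𝕜 E F)) :
    ‖M.toContinuousMultilinearMap‖ ≤ ‖M‖ :=
  MultilinearMap.mkContinuous_norm_le _ (norm_nonneg M) _

end ContinuousMap

namespace FormalMultilinearSeries

variable {𝕜 E F : Type*} [NontriviallyNormedField 𝕜] [NormedAddCommGroup E] [NormedSpace 𝕜 E]
  [NormedAddCommGroup F] [NormedSpace 𝕜 F]

theorem exists_summable_nnnorm_changeOrigin_le (p : FormalMultilinearSeries 𝕜 E F)
    {ρ δ : ℝ≥0} (h : (ρ + δ : ℝ≥0∞) < p.radius) :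
    ∃ C : ℕ → ℝ≥0, Summable (fun j => C j * δ ^ j) ∧
      ∀ x : E, ‖x‖₊ ≤ ρ → ∀ j, ‖p.changeOrigin x j‖₊ ≤ C j := by
  have hρ : (ρ : ℝ≥0∞) < p.radius := lt_of_le_of_lt le_self_add h
  refine ⟨fun j => ∑' s : Σ l : ℕ, { t : Finset (Fin (j + l)) // t.card = l },
    ‖p (j + s.1)‖₊ * ρ ^ s.1, ?_, fun x hx j => ?_⟩
  · simpa only [NNReal.tsum_mul_right] using
      (NNReal.summable_sigma.1 (p.changeOriginSeries_summable_aux₁ h)).2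
  · have hx' : (‖x‖₊ : ℝ≥0∞) < p.radius := lt_of_le_of_lt (by exact_mod_cast hx) hρ
    refine (p.nnnorm_changeOrigin_le j hx').trans <|
      Summable.tsum_le_tsum (fun s => ?_) (p.changeOriginSeries_summable_aux₂ hx' j)
        (p.changeOriginSeries_summable_aux₂ hρ j)
    gcongr

end FormalMultilinearSeries

variable {E G F Θ : Type*} [NormedAddCommGroup E] [NormedSpace ℂ E]
  [NormedAddCommGroup G] [NormedSpace ℂ G] [NormedAddCommGroup F] [NormedSpace ℂ F]
  [CompleteSpace F] [TopologicalSpace Θ] [CompactSpace Θ]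

theorem HasFPowerSeriesOnBall.exists_analyticAt_continuousMap {u : E × G → F}
    {p : FormalMultilinearSeries ℂ (E × G) F} {a : E} {w₀ : G} {R : ℝ≥0∞}
    (hu : HasFPowerSeriesOnBall u p (a, w₀) R) {ρ : ℝ≥0} (hρR : (ρ : ℝ≥0∞) < R)
    (w : C(Θ, G)) (hw : ∀ θ, ‖w θ - w₀‖₊ ≤ ρ) :
    ∃ Ψ : E → C(Θ, F), AnalyticAt ℂ Ψ a ∧ ∀ᶠ z in 𝓝 a, ∀ θ, Ψ z θ = u (z, w θ) := by
  obtain ⟨δ, hδ, hρδ⟩ := ENNReal.lt_iff_exists_add_pos_lt.1 hρR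
  have hρδp : (ρ + δ : ℝ≥0∞) < p.radius := hρδ.trans_le hu.r_le
  obtain ⟨C, hCδ, hC⟩ := p.exists_summable_nnnorm_changeOrigin_le hρδp
  -- `(a, w θ) = (a, w₀) + v θ`, so `p.changeOrigin (v θ)` expands `u` around `(a, w θ)`
  let v : C(Θ, E × G) := ⟨fun θ => (0, w θ - w₀), by fun_prop⟩
  have hv : ∀ θ, ‖v θ‖₊ ≤ ρ := fun θ => by simpa [v, Prod.nnnorm_def] using hw θ
  have hvp : ∀ θ, v θ ∈ eball (0 : E × G) p.radius := fun θ =>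
    mem_eball_zero_iff.2 <| lt_of_le_of_lt (by exact_mod_cast hv θ)
      (lt_of_le_of_lt le_self_add hρδp)
  let M (j : ℕ) : C(Θ, ContinuousMultilinearMap ℂ (fun _ : Fin j => E) F) :=
    ⟨fun θ => (p.changeOrigin (v θ) j).compContinuousLinearMap
        fun _ => ContinuousLinearMap.inl ℂ E G,
      (ContinuousMultilinearMap.compContinuousLinearMapL _).continuous.comp <|
        ((p.hasFPowerSeriesOnBall_changeOrigin j (hu.r_pos.trans_le hu.r_le)).continuousOn
          |>.comp_continuous v.continuous hvp)⟩
  let Q : FormalMultilinearSeries ℂ E C(Θ, F) := fun j => (M j).toContinuousMultilinearMap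
  have hQC : ∀ j, ‖Q j‖₊ ≤ C j := fun j => by
    refine (ContinuousMap.norm_toContinuousMultilinearMap_le _).trans <|
      (ContinuousMap.norm_le _ (C j).coe_nonneg).2 fun θ => ?_
    refine (ContinuousMultilinearMap.norm_compContinuousLinearMap_le _ _).trans ?_
    refine (mul_le_of_le_one_right (norm_nonneg _) ?_).trans (by exact_mod_cast hC _ (hv θ) j)
    exact Finset.prod_le_one (fun _ _ => norm_nonneg _) fun _ _ =>
      ContinuousLinearMap.norm_inl_le_one ℂ E G
  have hδQ : (δ : ℝ≥0∞) ≤ Q.radius :=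
    Q.le_radius_of_summable_nnnorm <|
      NNReal.summable_of_le (fun j => by gcongr; exact hQC j) hCδ
  refine ⟨fun z => Q.sum (z - a), ?_, ?_⟩
  · simpa using ((Q.hasFPowerSeriesOnBall ((ENNReal.coe_pos.2 hδ).trans_le hδQ)).comp_sub
      a).analyticAt
  · filter_upwards [Metric.eball_mem_nhds a (ENNReal.coe_pos.2 hδ)] with z hz θ
    have hza : ‖z - a‖ₑ < δ := by rwa [← edist_eq_enorm_sub]
    have hy : z - a ∈ eball (0 : E) Q.radius := mem_eball_zero_iff.2 (hza.trans_le hδQ)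
    have hvR : (‖v θ‖₊ : ℝ≥0∞) < R := lt_of_le_of_lt (by exact_mod_cast hv θ) hρR
    have hyR : ((z - a, (0 : G)) : E × G) ∈ eball 0 (R - ‖v θ‖₊) := by
      rw [mem_eball_zero_iff, lt_tsub_iff_left]
      calc (‖v θ‖₊ : ℝ≥0∞) + ‖((z - a, (0 : G)) : E × G)‖ₑ
          < ρ + δ := by
            refine ENNReal.add_lt_add_of_le_of_lt ENNReal.coe_ne_top (by exact_mod_cast hv θ) ?_
            simpa [enorm, Prod.nnnorm_def] using hza
        _ < R := hρδ
    have hθ : HasSum (fun j => Q j (fun _ => z - a) θ) (u (z, w θ)) := by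
      simpa [Q, M, v] using (hu.changeOrigin hvR).hasSum hyR
    exact ((ContinuousMap.evalCLM ℂ θ).hasSum (Q.hasSum hy)).unique hθ

namespace ContinuousMap

variable {F : Type*} [NormedAddCommGroup F] [NormedSpace ℂ F]

noncomputable def intervalIntegralCLM {α β : ℝ} (h : α ≤ β) : C(Icc α β, F) →L[ℂ] F :=
  LinearMap.mkContinuous
    { toFun := fun φ => ∫ θ in α..β, φ (projIcc α β h θ)
      map_add' := fun φ ψ => by
        simp only [ContinuousMap.add_apply]
        exact intervalIntegral.integral_add
          ((φ.continuous.comp continuous_projIcc).intervalIntegrable _ _)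
          ((ψ.continuous.comp continuous_projIcc).intervalIntegrable _ _)
      map_smul' := fun c φ => by
        simp only [ContinuousMap.smul_apply, RingHom.id_apply]
        exact intervalIntegral.integral_smul c _ }
    |β - α| fun φ => by
      simpa [mul_comm] using intervalIntegral.norm_integral_le_of_norm_le_const
        (C := ‖φ‖) fun θ _ => φ.norm_coe_le_norm _

end ContinuousMap

theorem HasFPowerSeriesOnBall.analyticAt_intervalIntegral {u : E × G → F}
    {p : FormalMultilinearSeries ℂ (E × G) F} {a : E} {w₀ : G} {R : ℝ≥0∞}
    (hu : HasFPowerSeriesOnBall u p (a, w₀) R) {ρ : ℝ≥0} (hρR : (ρ : ℝ≥0∞) < R)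
    {γ : ℝ → G} (hγ : Continuous γ) {α β : ℝ} (hαβ : α ≤ β)
    (hγρ : ∀ θ ∈ Icc α β, ‖γ θ - w₀‖₊ ≤ ρ) :
    AnalyticAt ℂ (fun z => ∫ θ in α..β, u (z, γ θ)) a := by
  obtain ⟨Ψ, hΨ, hΨu⟩ := hu.exists_analyticAt_continuousMap hρR
    ⟨fun θ : Icc α β => γ θ, by fun_prop⟩ fun θ => hγρ θ θ.2
  refine ((ContinuousMap.intervalIntegralCLM hαβ).analyticAt _).comp hΨ |>.congr ?_
  filter_upwards [hΨu] with z hz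
  refine intervalIntegral.integral_congr fun θ hθ => ?_
  rw [uIcc_of_le hαβ] at hθ
  simp [hz, projIcc_of_mem hαβ hθ]

theorem eventually_continuousOn_of_analyticAt {u : E × G → F} {a : E} {γ : ℝ → G}
    (hγ : Continuous γ) {s : Set ℝ} (hs : IsCompact s) (hu : ∀ θ ∈ s, AnalyticAt ℂ u (a, γ θ)) :
    ∀ᶠ z in 𝓝 a, ContinuousOn (fun θ => u (z, γ θ)) s := by
  have hK := (hs.image hγ).eventually_forall_of_forall_eventually
    (P := fun z w => AnalyticAt ℂ u (z, w)) <| by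
      rintro _ ⟨θ, hθ, rfl⟩
      exact (isOpen_analyticAt ℂ u).mem_nhds (hu θ hθ)
  filter_upwards [hK] with z hz
  exact fun θ hθ => ((hz _ (mem_image_of_mem γ hθ)).continuousAt.comp
    (f := fun θ => (z, γ θ)) (by fun_prop)).continuousWithinAt

theorem analyticAt_intervalIntegral {u : E × G → F} {a : E} {γ : ℝ → G} (hγ : Continuous γ)
    {α β : ℝ} (hαβ : α ≤ β) (hu : ∀ θ ∈ Icc α β, AnalyticAt ℂ u (a, γ θ)) :
    AnalyticAt ℂ (fun z => ∫ θ in α..β, u (z, γ θ)) a := by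
  choose p R hp using fun θ : Icc α β => hu θ θ.2
  choose ρ hρ hρR using fun θ => ENNReal.lt_iff_exists_nnreal_btwn.1 (hp θ).r_pos
  obtain ⟨t, ht0, ht, ⟨m, htm⟩, htρ⟩ := exists_monotone_Icc_subset_open_cover_Icc hαβ
    (c := fun θ₀ : Icc α β => {θ : Icc α β | ‖γ θ - γ θ₀‖₊ < ρ θ₀})
    (fun θ₀ => isOpen_lt (by fun_prop) continuous_const)
    (fun θ₀ _ => mem_iUnion.2 ⟨θ₀, by simpa using hρ θ₀⟩)
  choose i hi using htρ
  have hpiece : ∀ n, AnalyticAt ℂ (fun z => ∫ θ in t n..t (n + 1), u (z, γ θ)) a := fun n =>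
    (hp (i n)).analyticAt_intervalIntegral (hρR (i n)) hγ (ht n.le_succ) fun θ hθ =>
      (hi n (a := ⟨θ, (t n).2.1.trans hθ.1, hθ.2.trans (t (n + 1)).2.2⟩) hθ).le
  refine (Finset.analyticAt_fun_sum (Finset.range m) fun n _ => hpiece n).congr ?_
  filter_upwards [eventually_continuousOn_of_analyticAt hγ isCompact_Icc hu] with z hz
  rw [intervalIntegral.sum_integral_adjacent_intervals
    fun n _ => (hz.mono ?_).intervalIntegrable, ht0, htm m le_rfl]
  exact uIcc_subset_Icc (t _).2 (t _).2

theorem analyticAt_circleIntegral {u : E × ℂ → F} {a : E} {c : ℂ} {R : ℝ}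
    (hu : ∀ w ∈ sphere c |R|, AnalyticAt ℂ u (a, w)) :
    AnalyticAt ℂ (fun z => ∮ w in C(c, R), u (z, w)) a := by
  -- `deriv (circleMap c R) θ = (w - c) * I` at `w = circleMap c R θ`, analytic in `w`
  have := analyticAt_intervalIntegral (u := fun q : E × ℂ => ((q.2 - c) * Complex.I) • u q)
    (continuous_circleMap c R) Real.two_pi_pos.le fun θ _ =>
      ((analyticAt_snd.sub analyticAt_const).mul analyticAt_const).smul
        (hu _ (circleMap_mem_sphere' c R θ))
  refine this.congr (Eventually.of_forall fun z => ?_)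
  simp [circleIntegral, deriv_circleMap, circleMap_sub_center]

noncomputable def removableExtension {X Y : Type*} [TopologicalSpace Y] [Nonempty Y]
    (f : X × ℂ → Y) (x : X × ℂ) : Y :=
  Function.update (fun s => f (x.1, s)) 0 (limUnder (𝓝[≠] 0) fun s => f (x.1, s)) x.2

theorem removableExtension_of_ne {X Y : Type*} [TopologicalSpace Y] [Nonempty Y]
    {f : X × ℂ → Y} {x : X × ℂ} (hx : x.2 ≠ 0) : removableExtension f x = f x :=
  Function.update_of_ne hx _ _

theorem analyticAt_removableExtension {f : E × ℂ → F} {a : E} {M : ℝ}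
    (hana : ∀ᶠ x in 𝓝 (a, 0), x.2 ≠ 0 → AnalyticAt ℂ f x)
    (hbdd : ∀ᶠ x in 𝓝 (a, 0), ‖f x‖ ≤ M) :
    AnalyticAt ℂ (removableExtension f) (a, 0) := by
  obtain ⟨ε, hε, hεf⟩ := Metric.eventually_nhds_iff_ball.1 (hana.and hbdd)
  have hmem : ∀ z ∈ ball a ε, ∀ s ∈ ball (0 : ℂ) ε, (z, s) ∈ ball (a, 0) ε :=
    fun z hz s hs => by
      rw [← ball_prod_same]
      exact ⟨hz, hs⟩
  have hslice : ∀ z ∈ ball a ε,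
      DifferentiableOn ℂ (fun s => removableExtension f (z, s)) (ball 0 ε) := fun z hz =>
    Complex.differentiableOn_update_limUnder_of_bddAbove (ball_mem_nhds 0 hε)
      (fun s hs => ((hεf _ (hmem z hz s hs.1)).1 hs.2).comp (f := fun s => (z, s))
        (analyticAt_const.prod analyticAt_id) |>.differentiableAt.differentiableWithinAt)
      ⟨M, by
        rintro - ⟨s, hs, rfl⟩
        exact (hεf _ (hmem z hz s hs.1)).2⟩
  set r := ε / 2
  have hr : 0 < r := half_pos hε
  have hrε : r < ε := half_lt_self hε
  have hcauchy : ∀ z ∈ ball a ε, ∀ s ∈ ball (0 : ℂ) r, removableExtension f (z, s) =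
      (2 * Real.pi * Complex.I : ℂ)⁻¹ • ∮ w in C(0, r), (w - s)⁻¹ • f (z, w) := by
    intro z hz s hs
    have hd := (hslice z hz).mono (closedBall_subset_ball hrε)
    have hf : (∮ w in C(0, r), (w - s)⁻¹ • f (z, w)) =
        ∮ w in C(0, r), (w - s)⁻¹ • removableExtension f (z, w) :=
      circleIntegral.integral_congr hr.le fun w hw => by
        rw [removableExtension_of_ne (x := (z, w)) (ne_of_mem_sphere hw hr.ne')]
    rw [hf, hd.circleIntegral_sub_inv_smul hs, inv_smul_smul₀ Complex.two_pi_I_ne_zero]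
  have hintegral : AnalyticAt ℂ (fun q : E × ℂ => (2 * Real.pi * Complex.I : ℂ)⁻¹ •
      ∮ w in C(0, r), (w - q.2)⁻¹ • f (q.1, w)) (a, 0) := by
    refine analyticAt_const.smul (analyticAt_circleIntegral
      (u := fun q : (E × ℂ) × ℂ => (q.2 - q.1.2)⁻¹ • f (q.1.1, q.2)) fun w hw => ?_)
    rw [abs_of_pos hr] at hw
    have hw0 : w ≠ 0 := ne_of_mem_sphere hw hr.ne'
    have hwε : w ∈ ball (0 : ℂ) ε := by rwa [mem_ball_zero_iff, mem_sphere_zero_iff_norm.1 hw]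
    have hfw : AnalyticAt ℂ f (a, w) := (hεf _ (hmem a (mem_ball_self hε) w hwε)).1 hw0
    exact ((analyticAt_snd.sub (analyticAt_snd.comp analyticAt_fst)).inv
      (by simpa using hw0)).smul (hfw.comp (f := fun q : (E × ℂ) × ℂ => (q.1.1, q.2))
        ((analyticAt_fst.comp analyticAt_fst).prod analyticAt_snd))
  refine hintegral.congr ?_
  filter_upwards [ball_mem_nhds (a, (0 : ℂ)) hr] with q hq
  rw [← ball_prod_same] at hq
  exact (hcauchy q.1 (ball_subset_ball hrε.le hq.1) q.2 hq.2).symm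

theorem stmt3_general {m : ℕ} (U : Set ((Fin m → ℂ) × ℂ)) (hU : IsOpen U)
    (f : (Fin m → ℂ) × ℂ → ℂ)
    (hbdd : ∃ M : ℝ, ∀ x ∈ U, ‖f x‖ ≤ M)
    (hana : ∀ x ∈ U, x.2 ≠ 0 → AnalyticAt ℂ f x) :
    ∃ g : (Fin m → ℂ) × ℂ → ℂ, (∀ x ∈ U, AnalyticAt ℂ g x) ∧
      ∀ x ∈ U, x.2 ≠ 0 → g x = f x := by
  obtain ⟨M, hM⟩ := hbdd
  refine ⟨removableExtension f, fun x hx => ?_, fun x _ hx => removableExtension_of_ne hx⟩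
  obtain ⟨a, s⟩ := x
  rcases eq_or_ne s 0 with rfl | hs
  · exact analyticAt_removableExtension (eventually_of_mem (hU.mem_nhds hx) hana)
      (eventually_of_mem (hU.mem_nhds hx) hM)
  · refine (hana _ hx hs).congr ?_
    filter_upwards [(isOpen_ne.preimage continuous_snd).mem_nhds hs] with y hy
    exact (removableExtension_of_ne hy).symm

/-- Riemann removable singularity theorem in several variables: a function on an open
connected `U ⊂ ℂ^m × ℂ` which is bounded on `U` and complex analytic off the hyperplane
`{s = 0}` extends to (is) a complex analytic function on all of `U`. -/
theorem stmt3 {m : ℕ} (U : Set ((Fin m → ℂ) × ℂ)) (hU : IsOpen U) (hconn : IsConnected U)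
    (f : (Fin m → ℂ) × ℂ → ℂ)
    (hbdd : ∃ M : ℝ, ∀ x ∈ U, ‖f x‖ ≤ M)
    (hana : ∀ x ∈ U, x.2 ≠ 0 → AnalyticAt ℂ f x) :
    ∃ g : (Fin m → ℂ) × ℂ → ℂ, (∀ x ∈ U, AnalyticAt ℂ g x) ∧
      ∀ x ∈ U, x.2 ≠ 0 → g x = f x :=
  stmt3_general U hU f hbdd hana
end

section
/- Let a ∈ ℂ^N and b ∈ ℂ^N be such that whenever a_i = a_j one has b_i = b_j, and set γ = max over pairs with a_i ≠ a_j of |(b_i - a_i) - (b_j - a_j)|/|a_i - a_j|. Given a family f_1,...,f_N : ℂ^N → ℂ satisfying the Whitney interpolation axioms (1)-(5) with constant C, define the interpolation map ψ(z) = z + (Σ_i μ_i(z) D_i)/μ(z) for z ∉ {a_1,...,a_N} and ψ(a_i) = b_i, where μ_i(z) = f_i((z-a_1)^{-1},...,(z-a_N)^{-1}), μ = Σ μ_i, D_i = b_i - a_i. Then ψ : ℂ → ℂ is Lipschitz with constant 4N^3 C^4 γ + 1, and if γ < (4N^3 C^4)^{-1} then ψ is a bi-Lipschitz homeomorphism whose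 inverse has Lipschitz constant (1 - 4N^3 C^4 γ)^{-1}. -/
/-!
Off the nodes `a i`, the displacement `g = ψ - id` is the weighted average
`∑ μᵢ Dᵢ / ∑ μᵢ` of the data `Dᵢ = bᵢ - aᵢ`. Since `|ξᵢ| |z - aᵢ| = 1` for `ξ = ((z - aₖ)⁻¹)ₖ`,
the Lipschitz condition on the data gives `|ξᵢ| |Dᵢ - Dⱼ| ≤ 2γ ‖ξ‖ |z - aⱼ|`, and axioms (3), (5)
then give `|g z - Dⱼ| ≤ 2NC²γ |z - aⱼ|`; in particular `g` is continuous at the nodes.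
The derivative of the weighted average is `∑ μᵢ' (Dᵢ - g z) / ∑ μᵢ`, and axiom (4) bounds
`|μᵢ'|` by `NC |ξᵢ| ‖ξ‖ᵈ`, so `‖Dg‖ ≤ 2N³C⁴γ` off the nodes. A continuous map whose derivative
is bounded by `K` off a finite set is `K`-Lipschitz, because every segment meets that set at
finitely many parameters. Finally `ψ = id + g`, and when `g` is a contraction, `id + g` is
antilipschitz and, by the contraction principle applied to `z ↦ w - g z`, surjective.
-/

open Set

theorem norm_sub_le_of_norm_deriv_le_off_finite {E : Type*} [NormedAddCommGroup E]
    [NormedSpace ℝ E] {h : ℝ → E} {K : ℝ} {T : Set ℝ} (hT : T.Finite) {a b : ℝ} (hab : a ≤ b)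
    (hc : ContinuousOn h (Icc a b))
    (hd : ∀ t ∈ Ioo a b, t ∉ T → DifferentiableAt ℝ h t ∧ ‖deriv h t‖ ≤ K) :
    ‖h b - h a‖ ≤ K * (b - a) := by
  induction T, hT using Set.Finite.induction_on generalizing a b with
  | empty =>
    have := norm_sub_le_integral_of_norm_deriv_le_of_le (B := fun _ => K) hab hc
      (fun t ht => (hd t ht (notMem_empty t)).1.differentiableWithinAt)
      (.of_forall fun t ht => (hd t ht (notMem_empty t)).2) intervalIntegrable_const
    rwa [intervalIntegral.integral_const, smul_eq_mul, mul_comm] at this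
  | @insert c T _ _ ih =>
    by_cases hcab : c ∈ Ioo a b
    · have hac := ih hcab.1.le (hc.mono (Icc_subset_Icc_right hcab.2.le))
        fun t ht htT => hd t ⟨ht.1, ht.2.trans hcab.2⟩ (not_or.2 ⟨ht.2.ne, htT⟩)
      have hcb := ih hcab.2.le (hc.mono (Icc_subset_Icc_left hcab.1.le))
        fun t ht htT => hd t ⟨hcab.1.trans ht.1, ht.2⟩ (not_or.2 ⟨ht.1.ne', htT⟩)
      calc ‖h b - h a‖ ≤ ‖h b - h c‖ + ‖h c - h a‖ := norm_sub_le_norm_sub_add_norm_sub _ _ _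
        _ ≤ K * (b - c) + K * (c - a) := add_le_add hcb hac
        _ = K * (b - a) := by ring
    · exact ih hab hc fun t ht htT => hd t ht (not_or.2 ⟨fun htc => hcab (htc ▸ ht), htT⟩)

theorem lipschitzWith_of_nnnorm_fderiv_le_off_finite {F E : Type*} [NormedAddCommGroup F]
    [NormedSpace ℝ F] [NormedAddCommGroup E] [NormedSpace ℝ E] {g : F → E} {K : NNReal}
    {S : Set F} (hS : S.Finite) (hc : Continuous g)
    (hd : ∀ z ∉ S, DifferentiableAt ℝ g z ∧ ‖fderiv ℝ g z‖₊ ≤ K) : LipschitzWith K g := by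
  refine lipschitzWith_iff_norm_sub_le.2 fun q p => ?_
  rcases eq_or_ne p q with rfl | hpq
  · simp
  set ℓ := AffineMap.lineMap (k := ℝ) p q
  have hℓ : ∀ t, HasDerivAt ℓ (q - p) t := fun t => AffineMap.hasDerivAt_lineMap
  have hseg := norm_sub_le_of_norm_deriv_le_off_finite (h := g ∘ ℓ) (K := K * ‖q - p‖)
    (hS.preimage (AffineMap.lineMap_injective ℝ hpq).injOn) zero_le_one
    (hc.comp AffineMap.lineMap_continuous).continuousOn fun t _ ht => by
      obtain ⟨hgd, hgK⟩ := hd (ℓ t) ht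
      have := hgd.hasFDerivAt.comp_hasDerivAt t (hℓ t)
      refine ⟨this.differentiableAt, ?_⟩
      rw [this.deriv]
      exact (fderiv ℝ g (ℓ t)).le_of_opNorm_le hgK _
  simpa [ℓ, norm_sub_rev q p] using hseg

section
variable {E : Type*} [NormedAddCommGroup E] {g : E → E} {K : NNReal}

theorem antilipschitzWith_id_add (hg : LipschitzWith K g) (hK : K < 1) :
    AntilipschitzWith (1 - K)⁻¹ fun x => x + g x := by
  simpa using AntilipschitzWith.id.add_lipschitzWith hg (by simpa using hK)

theorem surjective_id_add [CompleteSpace E] (hg : LipschitzWith K g) (hK : K < 1) :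
    Function.Surjective fun x => x + g x := by
  intro w
  have hcontr : ContractingWith K fun x => w - g x :=
    ⟨hK, by simpa using (LipschitzWith.const w).sub hg⟩
  exact ⟨hcontr.fixedPoint, eq_sub_iff_add_eq.1 hcontr.fixedPoint_isFixedPt.symm⟩
end

theorem Finset.sum_mul_div_sum_sub {ι 𝕜 : Type*} [Field 𝕜] (s : Finset ι) (w x : ι → 𝕜) (c : 𝕜)
    (hw : ∑ i ∈ s, w i ≠ 0) :
    (∑ i ∈ s, w i * x i) / (∑ i ∈ s, w i) - c = (∑ i ∈ s, w i * (x i - c)) / ∑ i ∈ s, w i := by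
  rw [div_sub' hw]
  simp only [mul_sub, Finset.sum_sub_distrib, Finset.sum_mul]

theorem hasFDerivAt_sum_mul_div_sum {𝕜 𝕜' E ι : Type*} [NontriviallyNormedField 𝕜]
    [NormedField 𝕜'] [NormedAlgebra 𝕜 𝕜'] [NormedAddCommGroup E] [NormedSpace 𝕜 E]
    (s : Finset ι) {μ : ι → E → 𝕜'} {μ' : ι → E →L[𝕜] 𝕜'} (x : ι → 𝕜') {z : E}
    (hμ : ∀ i ∈ s, HasFDerivAt (μ i) (μ' i) z) (h0 : ∑ i ∈ s, μ i z ≠ 0) :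
    HasFDerivAt (fun w => (∑ i ∈ s, μ i w * x i) / ∑ i ∈ s, μ i w)
      ((∑ i ∈ s, μ i z)⁻¹ •
        ∑ i ∈ s, (x i - (∑ j ∈ s, μ j z * x j) / ∑ j ∈ s, μ j z) • μ' i) z := by
  -- after subtracting the value `c` at `z`, the numerator vanishes at `z`,
  -- so the derivative of the inverse of the denominator drops out
  set c := (∑ j ∈ s, μ j z * x j) / ∑ j ∈ s, μ j z
  have hS : HasFDerivAt (fun w => ∑ i ∈ s, μ i w) (∑ i ∈ s, μ' i) z := HasFDerivAt.fun_sum hμ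
  have hA : HasFDerivAt (fun w => ∑ i ∈ s, μ i w * (x i - c)) (∑ i ∈ s, (x i - c) • μ' i) z :=
    HasFDerivAt.fun_sum fun i hi => (hμ i hi).mul_const (x i - c)
  have hA0 : ∑ i ∈ s, μ i z * (x i - c) = 0 := by
    have := s.sum_mul_div_sum_sub (μ · z) x c h0
    rwa [sub_self, eq_comm, div_eq_zero_iff, or_iff_left h0] at this
  have hquot := hA.fun_mul (hS.differentiableAt.fun_inv h0).hasFDerivAt
  rw [hA0] at hquot
  refine ((hquot.const_add c).congr_fderiv (by ext v; simp)).congr_of_eventuallyEq ?_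
  filter_upwards [hS.continuousAt.eventually_ne h0] with w hw
  rw [← div_eq_mul_inv, ← s.sum_mul_div_sum_sub (μ · w) x c hw, add_sub_cancel]

namespace Whitney

variable {N : ℕ}

/-- In the paper's notation `μᵢ(z) = fᵢ (invSub a z)`. -/
noncomputable def invSub (a : Fin N → ℂ) (z : ℂ) : Fin N → ℂ := fun k => (z - a k)⁻¹

theorem norm_invSub_mul_norm_sub {a : Fin N → ℂ} {z : ℂ} {k : Fin N} (hz : z ≠ a k) :
    ‖invSub a z k‖ * ‖z - a k‖ = 1 := by
  rw [invSub, norm_inv, inv_mul_cancel₀ (norm_ne_zero_iff.2 (sub_ne_zero.2 hz))]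

theorem one_le_norm_invSub_mul {a : Fin N → ℂ} {z : ℂ} {k : Fin N} (hz : z ≠ a k) :
    1 ≤ ‖invSub a z‖ * ‖z - a k‖ :=
  (norm_invSub_mul_norm_sub hz).symm.le.trans <| by gcongr; exact norm_le_pi_norm _ k

theorem norm_invSub_pos {a : Fin N → ℂ} {z : ℂ} {k : Fin N} (hz : z ≠ a k) :
    0 < ‖invSub a z‖ :=
  pos_of_mul_pos_left (one_pos.trans_le (one_le_norm_invSub_mul hz)) (norm_nonneg _)

theorem norm_invSub_mul_norm_sub_le {a D : Fin N → ℂ} {γ : ℝ} (hγ : 0 ≤ γ)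
    (hDγ : ∀ i j, ‖D i - D j‖ ≤ γ * ‖a i - a j‖) {z : ℂ} (hz : ∀ k, z ≠ a k) (i j : Fin N) :
    ‖invSub a z i‖ * ‖D i - D j‖ ≤ 2 * γ * ‖invSub a z‖ * ‖z - a j‖ := by
  have hDij : ‖D i - D j‖ ≤ γ * (‖z - a i‖ + ‖z - a j‖) := by
    refine (hDγ i j).trans (mul_le_mul_of_nonneg_left ?_ hγ)
    simpa only [norm_sub_rev (a i)] using norm_sub_le_norm_sub_add_norm_sub (a i) z (a j)
  have hi := norm_invSub_mul_norm_sub (hz i)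
  have hj := one_le_norm_invSub_mul (hz j)
  have hξi : ‖invSub a z i‖ ≤ ‖invSub a z‖ := norm_le_pi_norm _ i
  calc ‖invSub a z i‖ * ‖D i - D j‖
      ≤ ‖invSub a z i‖ * (γ * (‖z - a i‖ + ‖z - a j‖)) := by gcongr
    _ = γ * (1 + ‖invSub a z i‖ * ‖z - a j‖) := by rw [← hi]; ring
    _ ≤ γ * (‖invSub a z‖ * ‖z - a j‖ + ‖invSub a z‖ * ‖z - a j‖) := by gcongr
    _ = 2 * γ * ‖invSub a z‖ * ‖z - a j‖ := by ring

/-- Off the nodes, the interpolation map is `z ↦ z + displacement f a (b - a) z`. -/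
noncomputable def displacement (f : Fin N → (Fin N → ℂ) → ℂ) (a D : Fin N → ℂ) (z : ℂ) : ℂ :=
  (∑ i, f i (invSub a z) * D i) / ∑ i, f i (invSub a z)

variable {d : ℕ} {C γ : ℝ} {f : Fin N → (Fin N → ℂ) → ℂ} {a D : Fin N → ℂ} {z : ℂ}

theorem norm_displacement_sub_le (hd : 0 < d) (hC : 0 < C) (hγ : 0 ≤ γ)
    (hDγ : ∀ i j, ‖D i - D j‖ ≤ γ * ‖a i - a j‖)
    (hbound : ∀ j (ξ : Fin N → ℂ), ‖f j ξ‖ ≤ C * ‖ξ j‖ * ‖ξ‖ ^ (d - 1))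
    (hlow : ∀ ξ : Fin N → ℂ, C⁻¹ * ‖ξ‖ ^ d ≤ ‖∑ i, f i ξ‖) (hz : ∀ k, z ≠ a k) (j : Fin N) :
    ‖displacement f a D z - D j‖ ≤ 2 * N * C ^ 2 * γ * ‖z - a j‖ := by
  set ξ := invSub a z
  have hM : 0 < ‖ξ‖ := norm_invSub_pos (hz j)
  have hμ : 0 < ‖∑ i, f i ξ‖ := (by positivity : 0 < C⁻¹ * ‖ξ‖ ^ d).trans_le (hlow ξ)
  have hterm : ∀ i, ‖f i ξ * (D i - D j)‖ ≤ 2 * C * γ * ‖ξ‖ ^ d * ‖z - a j‖ := fun i =>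
    calc ‖f i ξ * (D i - D j)‖ ≤ C * ‖ξ i‖ * ‖ξ‖ ^ (d - 1) * ‖D i - D j‖ := by
          rw [norm_mul]; gcongr; exact hbound i ξ
      _ = C * ‖ξ‖ ^ (d - 1) * (‖ξ i‖ * ‖D i - D j‖) := by ring
      _ ≤ C * ‖ξ‖ ^ (d - 1) * (2 * γ * ‖ξ‖ * ‖z - a j‖) :=
          mul_le_mul_of_nonneg_left (norm_invSub_mul_norm_sub_le hγ hDγ hz i j) (by positivity)
      _ = 2 * C * γ * (‖ξ‖ ^ (d - 1) * ‖ξ‖) * ‖z - a j‖ := by ring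
      _ = 2 * C * γ * ‖ξ‖ ^ d * ‖z - a j‖ := by rw [pow_sub_one_mul hd.ne']
  rw [displacement, Finset.sum_mul_div_sum_sub _ _ _ _ (norm_pos_iff.1 hμ), norm_div,
    div_le_iff₀ hμ]
  calc ‖∑ i, f i ξ * (D i - D j)‖ ≤ N * (2 * C * γ * ‖ξ‖ ^ d * ‖z - a j‖) := by
        simpa using (norm_sum_le _ _).trans (Finset.univ.sum_le_card_nsmul _ _ fun i _ => hterm i)
    _ = 2 * N * C ^ 2 * γ * ‖z - a j‖ * (C⁻¹ * ‖ξ‖ ^ d) := by field_simp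
    _ ≤ 2 * N * C ^ 2 * γ * ‖z - a j‖ * ‖∑ i, f i ξ‖ := by gcongr; exact hlow ξ

theorem hasFDerivAt_invSub (hz : ∀ k, z ≠ a k) :
    HasFDerivAt (invSub a)
      (ContinuousLinearMap.pi fun k => -invSub a z k ^ 2 • ContinuousLinearMap.id ℝ ℂ) z := by
  refine hasFDerivAt_pi.2 fun k => ?_
  have := (((hasDerivAt_id z).sub_const (a k)).inv (sub_ne_zero.2 (hz k))).hasFDerivAt
  convert this.restrictScalars ℝ using 1 <;> ext <;> simp [invSub, mul_comm, neg_div]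

theorem norm_comp_pi_smul_id_le {T : (Fin N → ℂ) →L[ℝ] ℂ} {ξ : Fin N → ℂ} (hξ : ∀ k, ξ k ≠ 0)
    {B : ℝ} (hB : 0 ≤ B) (hT : ∀ k v, ‖ξ k‖ ^ 2 * ‖T (Pi.single k v)‖ ≤ B * ‖v‖) :
    ‖T ∘L ContinuousLinearMap.pi fun k => -ξ k ^ 2 • ContinuousLinearMap.id ℝ ℂ‖ ≤ N * B := by
  refine ContinuousLinearMap.opNorm_le_bound _ (by positivity) fun v => ?_
  have hterm : ∀ k, ‖T (Pi.single k (-ξ k ^ 2 * v))‖ ≤ B * ‖v‖ := fun k => by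
    have hk : 0 < ‖ξ k‖ ^ 2 := by have := hξ k; positivity
    refine le_of_mul_le_mul_left ?_ hk
    calc ‖ξ k‖ ^ 2 * ‖T (Pi.single k (-ξ k ^ 2 * v))‖ ≤ B * ‖-ξ k ^ 2 * v‖ := hT k _
      _ = ‖ξ k‖ ^ 2 * (B * ‖v‖) := by simp only [norm_mul, norm_neg, norm_pow]; ring
  have hsum : (fun k => -ξ k ^ 2 * v) = ∑ k, Pi.single k (-ξ k ^ 2 * v) :=
    (Finset.univ_sum_single _).symm
  calc ‖T (fun k => -ξ k ^ 2 * v)‖ = ‖∑ k, T (Pi.single k (-ξ k ^ 2 * v))‖ := by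
        rw [hsum, map_sum]
    _ ≤ N * (B * ‖v‖) := by
        simpa using (norm_sum_le _ _).trans (Finset.univ.sum_le_card_nsmul _ _ fun k _ => hterm k)
    _ = N * B * ‖v‖ := by ring

theorem hasFDerivAt_displacement (hN : 0 < N) (hd : 0 < d) (hC : 0 < C) (hγ : 0 ≤ γ)
    (hDγ : ∀ i j, ‖D i - D j‖ ≤ γ * ‖a i - a j‖)
    (hdiff : ∀ i (ξ : Fin N → ℂ), (∀ l, ξ l ≠ 0) → DifferentiableAt ℝ (f i) ξ)
    (hbound : ∀ j (ξ : Fin N → ℂ), ‖f j ξ‖ ≤ C * ‖ξ j‖ * ‖ξ‖ ^ (d - 1))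
    (hderbound : ∀ j k (ξ : Fin N → ℂ), (∀ l, ξ l ≠ 0) → ∀ v : ℂ,
      ‖ξ k‖ ^ 2 * ‖fderiv ℝ (f j) ξ (Pi.single k v)‖ ≤ C * ‖ξ j‖ * ‖ξ‖ ^ d * ‖v‖)
    (hlow : ∀ ξ : Fin N → ℂ, C⁻¹ * ‖ξ‖ ^ d ≤ ‖∑ i, f i ξ‖) (hz : ∀ k, z ≠ a k) :
    ∃ L : ℂ →L[ℝ] ℂ, HasFDerivAt (displacement f a D) L z ∧ ‖L‖ ≤ 2 * N ^ 3 * C ^ 4 * γ := by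
  set ξ := invSub a z
  have hξ : ∀ k, ξ k ≠ 0 := fun k => inv_ne_zero (sub_ne_zero.2 (hz k))
  have hM : 0 < ‖ξ‖ := norm_invSub_pos (hz ⟨0, hN⟩)
  have hS : 0 < ‖∑ i, f i ξ‖ := (by positivity : 0 < C⁻¹ * ‖ξ‖ ^ d).trans_le (hlow ξ)
  set μ' : Fin N → ℂ →L[ℝ] ℂ := fun i => fderiv ℝ (f i) ξ ∘L
    ContinuousLinearMap.pi fun k => -ξ k ^ 2 • ContinuousLinearMap.id ℝ ℂ
  have hμ' : ∀ i, ‖μ' i‖ ≤ N * (C * ‖ξ i‖ * ‖ξ‖ ^ d) := fun i =>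
    norm_comp_pi_smul_id_le hξ (by positivity) (hderbound i · ξ hξ)
  have hterm : ∀ i, ‖D i - displacement f a D z‖ * ‖μ' i‖ ≤ 2 * N ^ 2 * C ^ 3 * γ * ‖ξ‖ ^ d :=
    fun i => calc
      _ ≤ 2 * N * C ^ 2 * γ * ‖z - a i‖ * (N * (C * ‖ξ i‖ * ‖ξ‖ ^ d)) := by
          rw [norm_sub_rev]
          gcongr
          exacts [norm_displacement_sub_le hd hC hγ hDγ hbound hlow hz i, hμ' i]
      _ = 2 * N ^ 2 * C ^ 3 * γ * ‖ξ‖ ^ d * (‖ξ i‖ * ‖z - a i‖) := by ring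
      _ = 2 * N ^ 2 * C ^ 3 * γ * ‖ξ‖ ^ d := by rw [norm_invSub_mul_norm_sub (hz i), mul_one]
  refine ⟨_, hasFDerivAt_sum_mul_div_sum Finset.univ D (fun i _ =>
    (hdiff i ξ hξ).hasFDerivAt.comp z (hasFDerivAt_invSub hz)) (norm_pos_iff.1 hS), ?_⟩
  calc _ ≤ ‖∑ i, f i ξ‖⁻¹ * (N * (2 * N ^ 2 * C ^ 3 * γ * ‖ξ‖ ^ d)) := by
        rw [norm_smul, norm_inv]
        gcongr
        refine (norm_sum_le _ _).trans <| (Finset.sum_le_sum fun i _ =>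
          (norm_smul _ _).le.trans (hterm i)).trans ?_
        simp
    _ ≤ (C⁻¹ * ‖ξ‖ ^ d)⁻¹ * (N * (2 * N ^ 2 * C ^ 3 * γ * ‖ξ‖ ^ d)) := by
        gcongr
        exact hlow ξ
    _ = 2 * N ^ 3 * C ^ 4 * γ := by field_simp

theorem lipschitzWith_of_eq_displacement (hN : 0 < N) (hd : 0 < d) (hC : 0 < C) (hγ : 0 ≤ γ)
    (hDγ : ∀ i j, ‖D i - D j‖ ≤ γ * ‖a i - a j‖)
    (hdiff : ∀ i (ξ : Fin N → ℂ), (∀ l, ξ l ≠ 0) → DifferentiableAt ℝ (f i) ξ)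
    (hbound : ∀ j (ξ : Fin N → ℂ), ‖f j ξ‖ ≤ C * ‖ξ j‖ * ‖ξ‖ ^ (d - 1))
    (hderbound : ∀ j k (ξ : Fin N → ℂ), (∀ l, ξ l ≠ 0) → ∀ v : ℂ,
      ‖ξ k‖ ^ 2 * ‖fderiv ℝ (f j) ξ (Pi.single k v)‖ ≤ C * ‖ξ j‖ * ‖ξ‖ ^ d * ‖v‖)
    (hlow : ∀ ξ : Fin N → ℂ, C⁻¹ * ‖ξ‖ ^ d ≤ ‖∑ i, f i ξ‖) {g : ℂ → ℂ}
    (hg : ∀ z, (∀ k, z ≠ a k) → g z = displacement f a D z) (hga : ∀ k, g (a k) = D k) :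
    LipschitzWith (Real.toNNReal (2 * N ^ 3 * C ^ 4 * γ)) g := by
  have hnear : ∀ z j, ‖g z - g (a j)‖ ≤ (γ + 2 * N * C ^ 2 * γ) * ‖z - a j‖ := by
    intro z j
    rw [hga]
    by_cases hz : ∀ k, z ≠ a k
    · rw [hg z hz]
      refine (norm_displacement_sub_le hd hC hγ hDγ hbound hlow hz j).trans ?_
      gcongr
      exact le_add_of_nonneg_left hγ
    · obtain ⟨k, rfl⟩ := not_forall_not.1 hz
      refine (hga k ▸ hDγ k j).trans ?_
      gcongr
      exact le_add_of_nonneg_right (by positivity)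
  have hopen : IsOpen {z | ∀ k, z ≠ a k} := by
    simpa [Set.compl_def, Set.mem_range, eq_comm] using (Set.finite_range a).isClosed.isOpen_compl
  have hderiv : ∀ z, (∀ k, z ≠ a k) →
      ∃ L : ℂ →L[ℝ] ℂ, HasFDerivAt g L z ∧ ‖L‖ ≤ 2 * N ^ 3 * C ^ 4 * γ := fun z hz => by
    obtain ⟨L, hL, hLK⟩ := hasFDerivAt_displacement (D := D) hN hd hC hγ hDγ hdiff hbound
      hderbound hlow hz
    exact ⟨L, hL.congr_of_eventuallyEq (Filter.eventually_of_mem (hopen.mem_nhds hz) hg), hLK⟩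
  refine lipschitzWith_of_nnnorm_fderiv_le_off_finite (Set.finite_range a) ?_ fun z hz => ?_
  · refine continuous_iff_continuousAt.2 fun z => ?_
    by_cases hz : ∀ k, z ≠ a k
    · obtain ⟨L, hL, -⟩ := hderiv z hz
      exact hL.continuousAt
    · obtain ⟨k, rfl⟩ := not_forall_not.1 hz
      exact continuousAt_of_locally_lipschitz one_pos _ fun z _ => by
        simpa [dist_eq_norm] using hnear z k
  · obtain ⟨L, hL, hLK⟩ := hderiv z fun k h => hz ⟨k, h.symm⟩
    refine ⟨hL.differentiableAt, ?_⟩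
    rw [hL.fderiv, ← NNReal.coe_le_coe, coe_nnnorm, Real.coe_toNNReal _ (by positivity)]
    exact hLK

end Whitney

theorem stmt13_general {N d : ℕ} (hN : 0 < N) (hd : 0 < d) (C : ℝ) (hC : 1 < C)
    (f : Fin N → (Fin N → ℂ) → ℂ)
    (hdiff : ∀ i (ξ : Fin N → ℂ), (∀ l, ξ l ≠ 0) → DifferentiableAt ℝ (f i) ξ)
    (hbound : ∀ j (ξ : Fin N → ℂ), ‖f j ξ‖ ≤ C * ‖ξ j‖ * ‖ξ‖ ^ (d - 1))
    (hderbound : ∀ j k (ξ : Fin N → ℂ), (∀ l, ξ l ≠ 0) → ∀ v : ℂ,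
      ‖ξ k‖ ^ 2 * ‖fderiv ℝ (f j) ξ (Pi.single k v)‖ ≤ C * ‖ξ j‖ * ‖ξ‖ ^ d * ‖v‖)
    (hreal : ∀ ξ : Fin N → ℂ, (∑ i, f i ξ).im = 0 ∧
      C⁻¹ * ‖ξ‖ ^ d ≤ (∑ i, f i ξ).re ∧ (∑ i, f i ξ).re ≤ C * ‖ξ‖ ^ d)
    (a b : Fin N → ℂ) (hab : ∀ i j, a i = a j → b i = b j)
    (γ : ℝ) (hγ0 : 0 ≤ γ)
    (hγ : ∀ i j, a i ≠ a j → ‖(b i - a i) - (b j - a j)‖ ≤ γ * ‖a i - a j‖)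
    (ψ : ℂ → ℂ)
    (hψ1 : ∀ z : ℂ, (∀ i, z ≠ a i) →
      ψ z = z + (∑ i, f i (fun k => (z - a k)⁻¹) * (b i - a i)) /
        (∑ i, f i (fun k => (z - a k)⁻¹)))
    (hψ2 : ∀ i, ψ (a i) = b i) :
    LipschitzWith (Real.toNNReal (4 * (N : ℝ) ^ 3 * C ^ 4 * γ + 1)) ψ ∧
      (γ < (4 * (N : ℝ) ^ 3 * C ^ 4)⁻¹ →
        Function.Bijective ψ ∧
        ∀ p q : ℂ, ‖p - q‖ ≤ (1 - 4 * (N : ℝ) ^ 3 * C ^ 4 * γ)⁻¹ * ‖ψ p - ψ q‖) := by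
  have hC0 : 0 < C := one_pos.trans hC
  set L := 4 * (N : ℝ) ^ 3 * C ^ 4 * γ
  have hL : 0 ≤ L := by positivity
  have hDγ : ∀ i j, ‖(b - a) i - (b - a) j‖ ≤ γ * ‖a i - a j‖ := fun i j => by
    by_cases h : a i = a j
    · simp [h, hab i j h]
    · exact hγ i j h
  have hg : LipschitzWith (Real.toNNReal L) fun z => ψ z - z :=
    (Whitney.lipschitzWith_of_eq_displacement hN hd hC0 hγ0 hDγ hdiff hbound hderbound
      (fun ξ => (hreal ξ).2.1.trans (Complex.re_le_norm _))
      (fun z hz => by rw [hψ1 z hz, add_sub_cancel_left]; rfl)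
      (fun k => by simp [hψ2])).weaken (Real.toNNReal_le_toNNReal (by linarith))
  have hψ : (fun z => z + (ψ z - z)) = ψ := funext fun z => add_sub_cancel z (ψ z)
  refine ⟨?_, fun hγ1 => ?_⟩
  · rw [Real.toNNReal_add hL zero_le_one, Real.toNNReal_one, add_comm]
    simpa [hψ] using LipschitzWith.id.add hg
  have hL1 : L < 1 := by
    have hpos : (0 : ℝ) < 4 * N ^ 3 * C ^ 4 := by positivity
    have := mul_lt_mul_of_pos_left hγ1 hpos
    rwa [mul_inv_cancel₀ hpos.ne'] at this
  have hK : Real.toNNReal L < 1 := by simpa using hL1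
  have hanti := antilipschitzWith_id_add hg hK
  rw [hψ] at hanti
  refine ⟨⟨hanti.injective, hψ ▸ surjective_id_add hg hK⟩, fun p q => ?_⟩
  simpa [dist_eq_norm, NNReal.coe_sub hK.le, Real.coe_toNNReal _ hL] using hanti.le_mul_dist p q

/-- Proposition (lipschitz): given a family `f₁,...,f_N : ℂ^N → ℂ` satisfying the Whitney
interpolation axioms (1)-(5) with constant `C > 1` and degree `d`, and `a, b ∈ ℂ^N` with
`a_i = a_j ⟹ b_i = b_j` and `γ` bounding `|(b_i-a_i)-(b_j-a_j)|/|a_i-a_j|`, the Whitney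
interpolation map `ψ(z) = z + (Σ μ_i(z)(b_i-a_i))/μ(z)`, `ψ(a_i) = b_i`, is Lipschitz with
constant `4N³C⁴γ + 1`, and if `γ < (4N³C⁴)⁻¹` it is a bi-Lipschitz homeomorphism whose
inverse has Lipschitz constant `(1 - 4N³C⁴γ)⁻¹`. -/
theorem stmt13 {N d : ℕ} (hN : 0 < N) (hd : 0 < d) (C : ℝ) (hC : 1 < C)
    (f : Fin N → (Fin N → ℂ) → ℂ)
    (hcont : ∀ i, Continuous (f i))
    (hdiff : ∀ i (ξ : Fin N → ℂ), (∀ l, ξ l ≠ 0) → DifferentiableAt ℝ (f i) ξ)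
    (hhom : ∀ i (ξ : Fin N → ℂ) (r : ℝ), 0 < r → f i (r • ξ) = (r : ℂ) ^ d * f i ξ)
    (hsym : ∀ i (ξ : Fin N → ℂ) (σ : Equiv.Perm (Fin N)), f i (ξ ∘ σ) = f (σ i) ξ)
    (hbound : ∀ j (ξ : Fin N → ℂ), ‖f j ξ‖ ≤ C * ‖ξ j‖ * ‖ξ‖ ^ (d - 1))
    (hderbound : ∀ j k (ξ : Fin N → ℂ), (∀ l, ξ l ≠ 0) → ∀ v : ℂ,
      ‖ξ k‖ ^ 2 * ‖fderiv ℝ (f j) ξ (Pi.single k v)‖ ≤ C * ‖ξ j‖ * ‖ξ‖ ^ d * ‖v‖)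
    (hreal : ∀ ξ : Fin N → ℂ, (∑ i, f i ξ).im = 0 ∧
      C⁻¹ * ‖ξ‖ ^ d ≤ (∑ i, f i ξ).re ∧ (∑ i, f i ξ).re ≤ C * ‖ξ‖ ^ d)
    (a b : Fin N → ℂ) (hab : ∀ i j, a i = a j → b i = b j)
    (γ : ℝ) (hγ0 : 0 ≤ γ)
    (hγ : ∀ i j, a i ≠ a j → ‖(b i - a i) - (b j - a j)‖ ≤ γ * ‖a i - a j‖)
    (ψ : ℂ → ℂ)
    (hψ1 : ∀ z : ℂ, (∀ i, z ≠ a i) →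
      ψ z = z + (∑ i, f i (fun k => (z - a k)⁻¹) * (b i - a i)) /
        (∑ i, f i (fun k => (z - a k)⁻¹)))
    (hψ2 : ∀ i, ψ (a i) = b i) :
    LipschitzWith (Real.toNNReal (4 * (N : ℝ) ^ 3 * C ^ 4 * γ + 1)) ψ ∧
      (γ < (4 * (N : ℝ) ^ 3 * C ^ 4)⁻¹ →
        Function.Bijective ψ ∧
        ∀ p q : ℂ, ‖p - q‖ ≤ (1 - 4 * (N : ℝ) ^ 3 * C ^ 4 * γ)⁻¹ * ‖ψ p - ψ q‖) :=
  stmt13_general hN hd C hC f hdiff hbound hderbound hreal a b hab γ hγ0 hγ ψ hψ1 hψ2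
end

section
/- With notation as in the Whitney interpolation construction (families f_i satisfying axioms (1)-(5), a, b ∈ ℂ^N with a_i = a_j ⟹ b_i = b_j), the interpolation map ψ is continuous at each a_j: lim_{z → a_j} ψ(z) = b_j. -/
/-!
Near `a j` write `ξ(z) = ((z - a k)⁻¹)ₖ` and `μ = Σ μ_i`. Then
`ψ z - b j = (z - a j) + Σ_i (μ_i / μ) (D_i - D_j)` with `D = b - a`, and the terms with
`a i = a j` vanish by the compatibility of `b` with `a`. For the others, the growth bounds give
`‖μ_i / μ‖ ≤ C² ‖ξ_i‖ / ‖ξ‖ ≤ C² ‖ξ_i‖ ‖z - a j‖`, since `‖ξ‖ ≥ ‖ξ_j‖ = ‖z - a j‖⁻¹`,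
while `ξ_i` stays bounded; so these ratios tend to `0`.
-/

open Filter Topology

namespace WhitneyInterpolation

variable {ι : Type*} [Fintype ι]

/-- The point `((z - a₁)⁻¹, …, (z - a_N)⁻¹)` at which the weights are evaluated. -/
noncomputable def invDist (a : ι → ℂ) (z : ℂ) : ι → ℂ := fun k => (z - a k)⁻¹

lemma inv_norm_sub_le_norm_invDist (a : ι → ℂ) (z : ℂ) (j : ι) :
    ‖z - a j‖⁻¹ ≤ ‖invDist a z‖ := by
  simpa [invDist] using norm_le_pi_norm (invDist a z) j

lemma sum_ne_zero_of_lower_bound {d : ℕ} {C : ℝ} (hC : 0 < C) {μ : ι → ℂ} {ξ : ι → ℂ}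
    (hξ : ξ ≠ 0) (hlow : C⁻¹ * ‖ξ‖ ^ d ≤ (∑ i, μ i).re) : ∑ i, μ i ≠ 0 := by
  have : 0 < (∑ i, μ i).re := lt_of_lt_of_le (by positivity [norm_pos_iff.mpr hξ]) hlow
  exact fun h => by simp [h] at this

lemma norm_div_sum_le {d : ℕ} (hd : 0 < d) {C : ℝ} (hC : 0 < C) {μ : ι → ℂ} {ξ : ι → ℂ}
    (hξ : ξ ≠ 0) (hbound : ∀ i, ‖μ i‖ ≤ C * ‖ξ i‖ * ‖ξ‖ ^ (d - 1))
    (hlow : C⁻¹ * ‖ξ‖ ^ d ≤ (∑ i, μ i).re) (i : ι) :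
    ‖μ i / ∑ k, μ k‖ ≤ C ^ 2 * ‖ξ i‖ / ‖ξ‖ := by
  have hξpos : 0 < ‖ξ‖ := norm_pos_iff.mpr hξ
  have hpow : ‖ξ‖ ^ d = ‖ξ‖ ^ (d - 1) * ‖ξ‖ := by
    rw [← pow_succ, Nat.sub_add_cancel hd]
  calc ‖μ i / ∑ k, μ k‖ ≤ C * ‖ξ i‖ * ‖ξ‖ ^ (d - 1) / (C⁻¹ * ‖ξ‖ ^ d) := by
        rw [norm_div]
        gcongr
        · exact hbound i
        · exact hlow.trans (Complex.re_le_norm _)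
    _ = C ^ 2 * ‖ξ i‖ / ‖ξ‖ := by
        rw [hpow]
        field_simp

lemma sum_mul_div_sum_eq {w D : ι → ℂ} (hw : ∑ i, w i ≠ 0) (c : ℂ) :
    (∑ i, w i * D i) / ∑ i, w i = c + ∑ i, w i / (∑ k, w k) * (D i - c) := by
  simp only [div_mul_eq_mul_div, ← Finset.sum_div, mul_sub, Finset.sum_sub_distrib,
    ← Finset.sum_mul]
  field_simp
  ring

lemma eventually_forall_ne_nhdsNE {X : Type*} [TopologicalSpace X] [T1Space X] (a : ι → X)
    (j : ι) : ∀ᶠ z in 𝓝[≠] a j, ∀ i, z ≠ a i := by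
  refine eventually_all.mpr fun i => ?_
  by_cases hij : a i = a j
  · exact hij ▸ self_mem_nhdsWithin
  · exact nhdsWithin_le_nhds (eventually_ne_nhds (Ne.symm hij))

lemma tendsto_div_sum_invDist {d : ℕ} (hd : 0 < d) {C : ℝ} (hC : 0 < C)
    (f : ι → (ι → ℂ) → ℂ) (hbound : ∀ i ξ, ‖f i ξ‖ ≤ C * ‖ξ i‖ * ‖ξ‖ ^ (d - 1))
    (hlow : ∀ ξ, C⁻¹ * ‖ξ‖ ^ d ≤ (∑ i, f i ξ).re) {a : ι → ℂ} {i j : ι} (hij : a i ≠ a j) :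
    Tendsto (fun z => f i (invDist a z) / ∑ k, f k (invDist a z)) (𝓝[≠] a j) (𝓝 0) := by
  have hmajorant : Tendsto (fun z => C ^ 2 * ‖invDist a z i‖ * ‖z - a j‖) (𝓝 (a j)) (𝓝 0) := by
    have hcont : ContinuousAt (fun z => C ^ 2 * ‖invDist a z i‖ * ‖z - a j‖) (a j) := by
      have : a j - a i ≠ 0 := sub_ne_zero.mpr hij.symm
      unfold invDist
      fun_prop (disch := assumption)
    simpa using hcont.tendsto
  refine squeeze_zero_norm' ?_ (hmajorant.mono_left nhdsWithin_le_nhds)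
  filter_upwards [self_mem_nhdsWithin] with z (hz : z ≠ a j)
  have hzj : 0 < ‖z - a j‖ := norm_pos_iff.mpr (sub_ne_zero.mpr hz)
  have hξ : invDist a z ≠ 0 :=
    norm_pos_iff.mp (lt_of_lt_of_le (by positivity) (inv_norm_sub_le_norm_invDist a z j))
  calc ‖f i (invDist a z) / ∑ k, f k (invDist a z)‖
      ≤ C ^ 2 * ‖invDist a z i‖ / ‖invDist a z‖ :=
        norm_div_sum_le hd hC hξ (fun k => hbound k _) (hlow _) i
    _ ≤ C ^ 2 * ‖invDist a z i‖ * ‖z - a j‖ := by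
        rw [div_eq_mul_inv]
        gcongr
        exact inv_le_of_inv_le₀ hzj (inv_norm_sub_le_norm_invDist a z j)

end WhitneyInterpolation

open WhitneyInterpolation in
theorem stmt14_general {N d : ℕ} (hd : 0 < d) (C : ℝ) (hC : 1 < C)
    (f : Fin N → (Fin N → ℂ) → ℂ)
    (hbound : ∀ j (ξ : Fin N → ℂ), ‖f j ξ‖ ≤ C * ‖ξ j‖ * ‖ξ‖ ^ (d - 1))
    (hreal : ∀ ξ : Fin N → ℂ, (∑ i, f i ξ).im = 0 ∧
      C⁻¹ * ‖ξ‖ ^ d ≤ (∑ i, f i ξ).re ∧ (∑ i, f i ξ).re ≤ C * ‖ξ‖ ^ d)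
    (a b : Fin N → ℂ) (hab : ∀ i j, a i = a j → b i = b j)
    (ψ : ℂ → ℂ)
    (hψ1 : ∀ z : ℂ, (∀ i, z ≠ a i) →
      ψ z = z + (∑ i, f i (fun k => (z - a k)⁻¹) * (b i - a i)) /
        (∑ i, f i (fun k => (z - a k)⁻¹)))
    (hψ2 : ∀ i, ψ (a i) = b i) :
    ∀ j : Fin N, Filter.Tendsto ψ (nhds (a j)) (nhds (b j)) := by
  intro j
  have hC0 : 0 < C := one_pos.trans hC
  set D : Fin N → ℂ := b - a
  set ratio : Fin N → ℂ → ℂ := fun i z => f i (invDist a z) / ∑ k, f k (invDist a z)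
  have hψ_eq : ∀ᶠ z in 𝓝[≠] a j, z + D j + ∑ i, ratio i z * (D i - D j) = ψ z := by
    filter_upwards [eventually_forall_ne_nhdsNE a j] with z hz
    have hμ : ∑ k, f k (invDist a z) ≠ 0 :=
      sum_ne_zero_of_lower_bound hC0
        (Function.ne_iff.mpr ⟨j, by simpa [invDist, sub_eq_zero] using hz j⟩) (hreal _).2.1
    rw [hψ1 z hz, add_assoc, ← sum_mul_div_sum_eq hμ]
    rfl
  have hterm : ∀ i, Tendsto (fun z => ratio i z * (D i - D j)) (𝓝[≠] a j) (𝓝 0) := by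
    intro i
    by_cases hij : a i = a j
    · simp [D, hij, hab i j hij]
    · simpa using (tendsto_div_sum_invDist hd hC0 f hbound (fun ξ => (hreal ξ).2.1)
        hij).mul_const (D i - D j)
  have hlim : Tendsto (fun z => z + D j + ∑ i, ratio i z * (D i - D j)) (𝓝[≠] a j)
      (𝓝 (b j)) := by
    simpa [D] using ((tendsto_nhdsWithin_of_tendsto_nhds tendsto_id).add_const (D j)).add
      (tendsto_finsetSum Finset.univ fun i _ => hterm i)
  have hwithin : ContinuousWithinAt ψ {a j}ᶜ (a j) := by
    rw [ContinuousWithinAt, hψ2 j]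
    exact hlim.congr' hψ_eq
  simpa [ContinuousAt, hψ2 j] using continuousWithinAt_compl_self.mp hwithin

/-- Continuity of the Whitney interpolation map at the interpolation points: with the
family `f₁,...,f_N` satisfying the Whitney interpolation axioms (1)-(5) and `a, b ∈ ℂ^N`
with `a_i = a_j ⟹ b_i = b_j`, the map `ψ(z) = z + (Σ μ_i(z)(b_i - a_i))/μ(z)` (for
`z ∉ {a₁,...,a_N}`), `ψ(a_i) = b_i`, satisfies `lim_{z → a_j} ψ(z) = b_j` for each `j`. -/
theorem stmt14 {N d : ℕ} (hN : 0 < N) (hd : 0 < d) (C : ℝ) (hC : 1 < C)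
    (f : Fin N → (Fin N → ℂ) → ℂ)
    (hcont : ∀ i, Continuous (f i))
    (hdiff : ∀ i (ξ : Fin N → ℂ), (∀ l, ξ l ≠ 0) → DifferentiableAt ℝ (f i) ξ)
    (hhom : ∀ i (ξ : Fin N → ℂ) (r : ℝ), 0 < r → f i (r • ξ) = (r : ℂ) ^ d * f i ξ)
    (hsym : ∀ i (ξ : Fin N → ℂ) (σ : Equiv.Perm (Fin N)), f i (ξ ∘ σ) = f (σ i) ξ)
    (hbound : ∀ j (ξ : Fin N → ℂ), ‖f j ξ‖ ≤ C * ‖ξ j‖ * ‖ξ‖ ^ (d - 1))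
    (hderbound : ∀ j k (ξ : Fin N → ℂ), (∀ l, ξ l ≠ 0) → ∀ v : ℂ,
      ‖ξ k‖ ^ 2 * ‖fderiv ℝ (f j) ξ (Pi.single k v)‖ ≤ C * ‖ξ j‖ * ‖ξ‖ ^ d * ‖v‖)
    (hreal : ∀ ξ : Fin N → ℂ, (∑ i, f i ξ).im = 0 ∧
      C⁻¹ * ‖ξ‖ ^ d ≤ (∑ i, f i ξ).re ∧ (∑ i, f i ξ).re ≤ C * ‖ξ‖ ^ d)
    (a b : Fin N → ℂ) (hab : ∀ i j, a i = a j → b i = b j)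
    (ψ : ℂ → ℂ)
    (hψ1 : ∀ z : ℂ, (∀ i, z ≠ a i) →
      ψ z = z + (∑ i, f i (fun k => (z - a k)⁻¹) * (b i - a i)) /
        (∑ i, f i (fun k => (z - a k)⁻¹)))
    (hψ2 : ∀ i, ψ (a i) = b i) :
    ∀ j : Fin N, Filter.Tendsto ψ (nhds (a j)) (nhds (b j)) :=
  stmt14_general hd C hC f hbound hreal a b hab ψ hψ1 hψ2
end

section
/- Fix constants C > 0 and 0 < θ < 1 and let f be a C^1 function with |∂f/∂v| ≤ C |f| for a C^1 unit vector field v and ‖grad f‖ ≥ C' |f|^θ on a region off V(f). Then the orthogonal projection w = v - (∂f/∂v / ‖grad f‖^2) grad f of v onto the levels of f satisfies: ∂f/∂w = 0 everywhere w is defined, and ‖w - v‖ ≤ (C/C') |f|^{1-θ}; in particular w extends continuously to V(f) by v. -/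
/-!
Removing from `v` its component along `g` leaves a vector orthogonal to `g`, and the removed
component has length `|⟪v, g⟫| / ‖g‖`. The regularity bound makes the numerator at most
`C |f|`, the Łojasiewicz inequality makes the denominator at least `C' |f|^θ`, so the
quotient is at most `(C / C') |f|^(1-θ)`, which tends to `0` with `f` because `θ < 1`.
-/

open Filter Topology RealInnerProductSpace

section Projection

variable {E : Type*} [NormedAddCommGroup E] [InnerProductSpace ℝ E]

theorem inner_sub_inner_div_norm_sq_smul_self (v g : E) :
    ⟪v - (⟪v, g⟫ / ‖g‖ ^ 2) • g, g⟫ = 0 := by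
  rcases eq_or_ne g 0 with rfl | hg
  · simp
  · rw [inner_sub_left, real_inner_smul_left, real_inner_self_eq_norm_sq,
      div_mul_cancel₀ _ (by positivity), sub_self]

theorem norm_inner_div_norm_sq_smul (v g : E) :
    ‖(⟪v, g⟫ / ‖g‖ ^ 2) • g‖ = |⟪v, g⟫| / ‖g‖ := by
  rcases eq_or_ne g 0 with rfl | hg
  · simp
  · have : ‖g‖ ≠ 0 := norm_ne_zero_iff.mpr hg
    rw [norm_smul, Real.norm_eq_abs, abs_div, abs_of_nonneg (sq_nonneg ‖g‖)]
    field_simp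

end Projection

theorem div_le_div_mul_rpow_one_sub {a b t C C' θ : ℝ} (hC' : 0 < C') (hθ : θ < 1)
    (ht : 0 ≤ t) (ha : 0 ≤ a) (hat : a ≤ C * t) (hbt : C' * t ^ θ ≤ b) :
    a / b ≤ C / C' * t ^ (1 - θ) := by
  rcases ht.eq_or_lt with rfl | ht
  · rw [le_antisymm (by simpa using hat) ha, zero_div, Real.zero_rpow (by linarith), mul_zero]
  · calc a / b ≤ C * t / (C' * t ^ θ) := div_le_div₀ (ha.trans hat) hat (by positivity) hbt
      _ = C / C' * t ^ (1 - θ) := by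
        rw [Real.rpow_sub ht, Real.rpow_one]
        field_simp

theorem tendsto_nhdsWithin_of_norm_sub_le_mul_rpow {E F : Type*} [TopologicalSpace E]
    [SeminormedAddCommGroup F] {f : E → ℝ} {v w : E → F} {S : Set E} {x₀ : E} {K p : ℝ}
    (hp : 0 < p) (hf : ContinuousAt f x₀) (hf₀ : f x₀ = 0) (hv : ContinuousAt v x₀)
    (hwv : ∀ x ∈ S, ‖w x - v x‖ ≤ K * |f x| ^ p) :
    Tendsto w (𝓝[S] x₀) (𝓝 (v x₀)) := by
  have hf_abs : Tendsto (fun x => |f x|) (𝓝[S] x₀) (𝓝 0) := by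
    simpa [hf₀] using hf.tendsto.abs.mono_left nhdsWithin_le_nhds
  have hbound : Tendsto (fun x => K * |f x| ^ p) (𝓝[S] x₀) (𝓝 0) := by
    simpa using (hf_abs.rpow_const_nhds_zero hp).const_mul K
  refine hv.continuousWithinAt.tendsto.congr_dist (squeeze_zero' ?_ ?_ hbound)
  · exact Eventually.of_forall fun _ => dist_nonneg
  · filter_upwards [self_mem_nhdsWithin] with x hx
    rw [dist_comm, dist_eq_norm]
    exact hwv x hx

theorem stmt16_general {E : Type*} [NormedAddCommGroup E] [InnerProductSpace ℝ E]
    (f : E → ℝ) (v g w : E → E) (S : Set E)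
    (C C' θ : ℝ) (hC' : 0 < C') (hθ1 : θ < 1)
    (hCb : ∀ x ∈ S, |(inner ℝ (v x) (g x) : ℝ)| ≤ C * |f x|)
    (hLoj : ∀ x ∈ S, C' * |f x| ^ θ ≤ ‖g x‖)
    (hw : ∀ x ∈ S, w x = v x - (((inner ℝ (v x) (g x) : ℝ)) / ‖g x‖ ^ 2) • g x) :
    (∀ x ∈ S, (inner ℝ (w x) (g x) : ℝ) = 0) ∧
    (∀ x ∈ S, ‖w x - v x‖ ≤ (C / C') * |f x| ^ (1 - θ)) ∧
    (∀ x₀ : E, f x₀ = 0 → ContinuousAt f x₀ → ContinuousAt v x₀ →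
      Filter.Tendsto w (nhdsWithin x₀ S) (nhds (v x₀))) := by
  have hbound : ∀ x ∈ S, ‖w x - v x‖ ≤ (C / C') * |f x| ^ (1 - θ) := by
    intro x hx
    rw [hw x hx, sub_sub_cancel_left, norm_neg, norm_inner_div_norm_sq_smul]
    exact div_le_div_mul_rpow_one_sub hC' hθ1 (abs_nonneg _) (abs_nonneg _) (hCb x hx)
      (hLoj x hx)
  refine ⟨fun x hx => ?_, hbound, fun x₀ hf₀ hf hv => ?_⟩
  · rw [hw x hx]
    exact inner_sub_inner_div_norm_sq_smul_self (v x) (g x)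
  · exact tendsto_nhdsWithin_of_norm_sub_le_mul_rpow (sub_pos.mpr hθ1) hf hf₀ hv hbound

/-- The key estimate in the proof that Zariski equisingularity gives topological
triviality of the defining function: if `v` is a unit vector field, `g = grad f ≠ 0` on
`S`, `|∂f/∂v| = |⟨v, grad f⟩| ≤ C |f|` and the Łojasiewicz inequality
`‖grad f‖ ≥ C' |f|^θ` holds on `S` with `0 < θ < 1`, then the orthogonal projection
`w = v - (⟨v, grad f⟩/‖grad f‖²) grad f` of `v` onto the levels of `f` satisfies
`∂f/∂w = 0` on `S` and `‖w - v‖ ≤ (C/C') |f|^{1-θ}`; in particular `w` extends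
continuously to `V(f)` by `v`. -/
theorem stmt16 {E : Type*} [NormedAddCommGroup E] [InnerProductSpace ℝ E] [CompleteSpace E]
    (f : E → ℝ) (v g w : E → E) (S : Set E)
    (C C' θ : ℝ) (hC : 0 < C) (hC' : 0 < C') (hθ0 : 0 < θ) (hθ1 : θ < 1)
    (hunit : ∀ x ∈ S, ‖v x‖ = 1)
    (hgrad : ∀ x ∈ S, HasGradientAt f (g x) x)
    (hgne : ∀ x ∈ S, g x ≠ 0)
    (hCb : ∀ x ∈ S, |(inner ℝ (v x) (g x) : ℝ)| ≤ C * |f x|)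
    (hLoj : ∀ x ∈ S, C' * |f x| ^ θ ≤ ‖g x‖)
    (hw : ∀ x ∈ S, w x = v x - (((inner ℝ (v x) (g x) : ℝ)) / ‖g x‖ ^ 2) • g x) :
    (∀ x ∈ S, (inner ℝ (w x) (g x) : ℝ) = 0) ∧
    (∀ x ∈ S, ‖w x - v x‖ ≤ (C / C') * |f x| ^ (1 - θ)) ∧
    (∀ x₀ : E, f x₀ = 0 → ContinuousAt f x₀ → ContinuousAt v x₀ →
      Filter.Tendsto w (nhdsWithin x₀ S) (nhds (v x₀))) :=
  stmt16_general f v g w S C C' θ hC' hθ1 hCb hLoj hw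
end
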